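/- arXiv:1909.02140 — 4 statements merged into one kernel-verified Lean document; each statement's English description precedes it below -/
import Mathlib

section
/- Let K ⊆ ℝ² be a convex set containing the unit square [0,1] × [0,1], and suppose that each of the four points (0,0), (1,0), (0,1), (1,1) lies in the frontier (topological boundary) of K. Then K ⊆ ([0,1] × ℝ) ∪ (ℝ × [0,1]). -/
lemma aux_interior (K : Set (ℝ × ℝ)) (hK : Convex ℝ K)
    (hsq : Set.Icc (0 : ℝ) 1 ×ˢ Set.Icc (0 : ℝ) 1 ⊆ K)
    (p : ℝ × ℝ) (hp : p ∈ K) (t : ℝ) (ht0 : 0 < t) (ht1 : t < 1) (c : ℝ × ℝ)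
    (h1 : t * p.1 < c.1) (h2 : c.1 < t * p.1 + (1 - t))
    (h3 : t * p.2 < c.2) (h4 : c.2 < t * p.2 + (1 - t)) : c ∈ interior K := by
  have h1t : (0:ℝ) < 1 - t := by linarith
  have hbox : Set.Icc (t*p.1) (t*p.1+(1-t)) ×ˢ Set.Icc (t*p.2) (t*p.2+(1-t)) ⊆ K := by
    rintro ⟨x, y⟩ ⟨hx, hy⟩
    simp only [Set.mem_Icc] at hx hy
    have hq : (((x - t*p.1)/(1-t), (y - t*p.2)/(1-t)) : ℝ × ℝ)
        ∈ Set.Icc (0 : ℝ) 1 ×ˢ Set.Icc (0 : ℝ) 1 := by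
      constructor <;> simp only [Set.mem_Icc] <;> constructor
      · exact div_nonneg (by linarith [hx.1]) h1t.le
      · rw [div_le_one h1t]; linarith [hx.2]
      · exact div_nonneg (by linarith [hy.1]) h1t.le
      · rw [div_le_one h1t]; linarith [hy.2]
    have hmem := hK (hsq hq) hp h1t.le ht0.le (by ring)
    have heq : (1 - t) • (((x - t*p.1)/(1-t), (y - t*p.2)/(1-t)) : ℝ × ℝ) + t • p = (x, y) := by
      apply Prod.ext <;> simp [Prod.smul_fst, Prod.smul_snd, smul_eq_mul] <;>
        field_simp <;> ring
    rwa [heq] at hmem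
  have hcint : c ∈ interior (Set.Icc (t*p.1) (t*p.1+(1-t)) ×ˢ
      Set.Icc (t*p.2) (t*p.2+(1-t))) := by
    rw [interior_prod_eq, interior_Icc, interior_Icc]
    exact ⟨⟨h1, h2⟩, ⟨h3, h4⟩⟩
  exact interior_mono hbox hcint


lemma half_mul (a : ℝ) (ha : 0 < a) : (1/(2*a)) * a = 1/2 := by
  have h : a ≠ 0 := ha.ne'
  field_simp

/-- If `K ⊆ ℝ²` is convex, contains the unit square `[0,1] × [0,1]`, and the
four points `(0,0)`, `(1,0)`, `(0,1)`, `(1,1)` all lie in the frontier of `K`, then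
`K ⊆ ([0,1] × ℝ) ∪ (ℝ × [0,1])`. -/
theorem convex_unitSquare_frontier_subset_strips (K : Set (ℝ × ℝ)) (hK : Convex ℝ K)
    (hsq : Set.Icc (0 : ℝ) 1 ×ˢ Set.Icc (0 : ℝ) 1 ⊆ K)
    (h00 : ((0 : ℝ), (0 : ℝ)) ∈ frontier K)
    (h10 : ((1 : ℝ), (0 : ℝ)) ∈ frontier K)
    (h01 : ((0 : ℝ), (1 : ℝ)) ∈ frontier K)
    (h11 : ((1 : ℝ), (1 : ℝ)) ∈ frontier K) :
    K ⊆ (Set.Icc (0 : ℝ) 1 ×ˢ (Set.univ : Set ℝ)) ∪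
        ((Set.univ : Set ℝ) ×ˢ Set.Icc (0 : ℝ) 1) := by
  intro p hp
  by_contra hcon
  simp only [Set.mem_union, Set.mem_prod, Set.mem_univ, and_true, true_and,
    Set.mem_Icc, not_or, not_and_or, not_le] at hcon
  obtain ⟨hx, hy⟩ := hcon
  rcases hx with hx | hx <;> rcases hy with hy | hy
  · set t := min (1/(2*(1-p.1))) (1/(2*(1-p.2))) with htdef
    have hpa : (1:ℝ) < 1-p.1 := by nlinarith
    have hpb : (1:ℝ) < 1-p.2 := by nlinarith
    have hpa0 : (0:ℝ) < 1-p.1 := by linarith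
    have hpb0 : (0:ℝ) < 1-p.2 := by linarith
    have ht1 : (0:ℝ) < 1/(2*(1-p.1)) := one_div_pos.mpr (by nlinarith)
    have ht2 : (0:ℝ) < 1/(2*(1-p.2)) := one_div_pos.mpr (by nlinarith)
    have ht0 : 0 < t := lt_min ht1 ht2
    have hma := min_le_left (1/(2*(1-p.1))) (1/(2*(1-p.2)))
    have hmb := min_le_right (1/(2*(1-p.1))) (1/(2*(1-p.2)))
    have hta : t * (1-p.1) ≤ 1/2 := by
      have h := mul_le_mul_of_nonneg_right hma hpa0.le
      rwa [half_mul (1-p.1) hpa0] at h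
    have htb : t * (1-p.2) ≤ 1/2 := by
      have h := mul_le_mul_of_nonneg_right hmb hpb0.le
      rwa [half_mul (1-p.2) hpb0] at h
    clear hma hmb htdef ht1 ht2
    have htlt1 : t < 1 := by nlinarith
    exact h00.2 (aux_interior K hK hsq p hp t ht0 htlt1 _
      (by simp only []; nlinarith) (by simp only []; nlinarith)
      (by simp only []; nlinarith) (by simp only []; nlinarith))
  · set t := min (1/(2*(1-p.1))) (1/(2*(p.2))) with htdef
    have hpa : (1:ℝ) < 1-p.1 := by nlinarith
    have hpb : (1:ℝ) < p.2 := by nlinarith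
    have hpa0 : (0:ℝ) < 1-p.1 := by linarith
    have hpb0 : (0:ℝ) < p.2 := by linarith
    have ht1 : (0:ℝ) < 1/(2*(1-p.1)) := one_div_pos.mpr (by nlinarith)
    have ht2 : (0:ℝ) < 1/(2*(p.2)) := one_div_pos.mpr (by nlinarith)
    have ht0 : 0 < t := lt_min ht1 ht2
    have hma := min_le_left (1/(2*(1-p.1))) (1/(2*(p.2)))
    have hmb := min_le_right (1/(2*(1-p.1))) (1/(2*(p.2)))
    have hta : t * (1-p.1) ≤ 1/2 := by
      have h := mul_le_mul_of_nonneg_right hma hpa0.le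
      rwa [half_mul (1-p.1) hpa0] at h
    have htb : t * (p.2) ≤ 1/2 := by
      have h := mul_le_mul_of_nonneg_right hmb hpb0.le
      rwa [half_mul (p.2) hpb0] at h
    clear hma hmb htdef ht1 ht2
    have htlt1 : t < 1 := by nlinarith
    exact h01.2 (aux_interior K hK hsq p hp t ht0 htlt1 _
      (by simp only []; nlinarith) (by simp only []; nlinarith)
      (by simp only []; nlinarith) (by simp only []; nlinarith))
  · set t := min (1/(2*(p.1))) (1/(2*(1-p.2))) with htdef
    have hpa : (1:ℝ) < p.1 := by nlinarith
    have hpb : (1:ℝ) < 1-p.2 := by nlinarith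
    have hpa0 : (0:ℝ) < p.1 := by linarith
    have hpb0 : (0:ℝ) < 1-p.2 := by linarith
    have ht1 : (0:ℝ) < 1/(2*(p.1)) := one_div_pos.mpr (by nlinarith)
    have ht2 : (0:ℝ) < 1/(2*(1-p.2)) := one_div_pos.mpr (by nlinarith)
    have ht0 : 0 < t := lt_min ht1 ht2
    have hma := min_le_left (1/(2*(p.1))) (1/(2*(1-p.2)))
    have hmb := min_le_right (1/(2*(p.1))) (1/(2*(1-p.2)))
    have hta : t * (p.1) ≤ 1/2 := by
      have h := mul_le_mul_of_nonneg_right hma hpa0.le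
      rwa [half_mul (p.1) hpa0] at h
    have htb : t * (1-p.2) ≤ 1/2 := by
      have h := mul_le_mul_of_nonneg_right hmb hpb0.le
      rwa [half_mul (1-p.2) hpb0] at h
    clear hma hmb htdef ht1 ht2
    have htlt1 : t < 1 := by nlinarith
    exact h10.2 (aux_interior K hK hsq p hp t ht0 htlt1 _
      (by simp only []; nlinarith) (by simp only []; nlinarith)
      (by simp only []; nlinarith) (by simp only []; nlinarith))
  · set t := min (1/(2*(p.1))) (1/(2*(p.2))) with htdef
    have hpa : (1:ℝ) < p.1 := by nlinarith
    have hpb : (1:ℝ) < p.2 := by nlinarith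
    have hpa0 : (0:ℝ) < p.1 := by linarith
    have hpb0 : (0:ℝ) < p.2 := by linarith
    have ht1 : (0:ℝ) < 1/(2*(p.1)) := one_div_pos.mpr (by nlinarith)
    have ht2 : (0:ℝ) < 1/(2*(p.2)) := one_div_pos.mpr (by nlinarith)
    have ht0 : 0 < t := lt_min ht1 ht2
    have hma := min_le_left (1/(2*(p.1))) (1/(2*(p.2)))
    have hmb := min_le_right (1/(2*(p.1))) (1/(2*(p.2)))
    have hta : t * (p.1) ≤ 1/2 := by
      have h := mul_le_mul_of_nonneg_right hma hpa0.le
      rwa [half_mul (p.1) hpa0] at h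
    have htb : t * (p.2) ≤ 1/2 := by
      have h := mul_le_mul_of_nonneg_right hmb hpb0.le
      rwa [half_mul (p.2) hpb0] at h
    clear hma hmb htdef ht1 ht2
    have htlt1 : t < 1 := by nlinarith
    exact h11.2 (aux_interior K hK hsq p hp t ht0 htlt1 _
      (by simp only []; nlinarith) (by simp only []; nlinarith)
      (by simp only []; nlinarith) (by simp only []; nlinarith))
end

section
/- Every empty lattice polygon in ℝ² is unimodularly equivalent either to the standard triangle conv{(0,0),(1,0),(0,1)} or to the unit square conv{(0,0),(1,0),(0,1),(1,1)}. -/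
/-- The embedding of the lattice `ℤ²` into `ℝ²`. -/
def latticePt (p : ℤ × ℤ) : ℝ × ℝ := ((p.1 : ℝ), (p.2 : ℝ))

/-- The set of lattice points of `ℝ²`. -/
def lattice2 : Set (ℝ × ℝ) := Set.range latticePt

/-- A lattice polygon: the convex hull in `ℝ²` of a finite subset of `ℤ²`, with
nonempty interior. -/
def IsLatticePolygon (P : Set (ℝ × ℝ)) : Prop :=
  (∃ S : Finset (ℤ × ℤ), P = convexHull ℝ (latticePt '' (S : Set (ℤ × ℤ)))) ∧
    (interior P).Nonempty

/-- A lattice polygon is empty if its set of lattice points equals its set of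
extreme points (vertices). -/
def IsEmptyPolygon (Q : Set (ℝ × ℝ)) : Prop :=
  Q ∩ lattice2 = Set.extremePoints ℝ Q

/-- Two subsets of `ℝ²` are unimodularly equivalent if one is the image of the other
under a map `x ↦ Ax + c` with `A ∈ GL₂(ℤ)` (i.e. `det A = ±1`) and `c ∈ ℤ²`. -/
def UnimodEquiv (A B : Set (ℝ × ℝ)) : Prop :=
  ∃ a b c d e f : ℤ, (a * d - b * c = 1 ∨ a * d - b * c = -1) ∧
    B = (fun x : ℝ × ℝ =>
      ((a : ℝ) * x.1 + (b : ℝ) * x.2 + (e : ℝ), (c : ℝ) * x.1 + (d : ℝ) * x.2 + (f : ℝ))) '' A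

/-- The standard triangle `conv{(0,0),(1,0),(0,1)}`. -/
def stdTriangle : Set (ℝ × ℝ) :=
  convexHull ℝ {((0 : ℝ), (0 : ℝ)), ((1 : ℝ), (0 : ℝ)), ((0 : ℝ), (1 : ℝ))}

/-- The unit square `conv{(0,0),(1,0),(0,1),(1,1)}`. -/
def unitSquare : Set (ℝ × ℝ) :=
  convexHull ℝ {((0 : ℝ), (0 : ℝ)), ((1 : ℝ), (0 : ℝ)), ((0 : ℝ), (1 : ℝ)), ((1 : ℝ), (1 : ℝ))}

namespace EPC

def det2 (a b : ℤ × ℤ) : ℤ := a.1 * b.2 - a.2 * b.1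

lemma latticePt_injective : Function.Injective latticePt := by
  intro p q h
  have h1 : (p.1 : ℝ) = q.1 := congrArg Prod.fst h
  have h2 : (p.2 : ℝ) = q.2 := congrArg Prod.snd h
  exact Prod.ext (by exact_mod_cast h1) (by exact_mod_cast h2)

lemma mem_hull3 {U V W : ℝ × ℝ} {s t : ℝ} (hs : 0 ≤ s) (ht : 0 ≤ t) (hst : s + t ≤ 1) :
    (1 - s - t) • U + s • V + t • W ∈ convexHull ℝ ({U, V, W} : Set (ℝ × ℝ)) := by
  set S : Set (ℝ × ℝ) := {U, V, W} with hSdef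
  have hc : Convex ℝ (convexHull ℝ S) := convex_convexHull ℝ S
  have hU : U ∈ convexHull ℝ S := subset_convexHull ℝ S (by simp [hSdef])
  have hV : V ∈ convexHull ℝ S := subset_convexHull ℝ S (by simp [hSdef])
  have hW : W ∈ convexHull ℝ S := subset_convexHull ℝ S (by simp [hSdef])
  rcases eq_or_lt_of_le (add_nonneg hs ht) with h0 | h0
  · have hs0 : s = 0 := by linarith
    have ht0 : t = 0 := by linarith
    simpa [hs0, ht0] using hU
  · have hu : s + t ≠ 0 := ne_of_gt h0
    have hZ : (s / (s + t)) • V + (t / (s + t)) • W ∈ convexHull ℝ S :=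
      hc hV hW (div_nonneg hs (le_of_lt h0)) (div_nonneg ht (le_of_lt h0))
        (by field_simp)
    have hmem := hc hU hZ (by linarith : (0:ℝ) ≤ 1 - (s + t)) (le_of_lt h0) (by ring)
    have heq : (1 - (s + t)) • U + (s + t) • ((s / (s + t)) • V + (t / (s + t)) • W)
        = (1 - s - t) • U + s • V + t • W := by
      rw [smul_add, smul_smul, smul_smul]
      rw [mul_div_cancel₀ _ hu, mul_div_cancel₀ _ hu]
      rw [show (1 : ℝ) - (s + t) = 1 - s - t by ring, add_assoc]
    rwa [heq] at hmem

lemma extreme_not_combo {Q : Set (ℝ × ℝ)} (hQ : Convex ℝ Q) {U V W x : ℝ × ℝ}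
    (hU : U ∈ Q) (hV : V ∈ Q) (hW : W ∈ Q)
    (hx : x ∈ Set.extremePoints ℝ Q) {c0 c1 c2 : ℝ}
    (h0 : 0 ≤ c0) (h1 : 0 ≤ c1) (h2 : 0 ≤ c2) (hsum : c0 + c1 + c2 = 1)
    (hxe : x = c0 • U + c1 • V + c2 • W)
    (hxU : x ≠ U) (hxV : x ≠ V) (hxW : x ≠ W) : False := by
  obtain ⟨hxQ, hext⟩ := hx
  rcases eq_or_lt_of_le (add_nonneg h1 h2) with hu | hu
  · have e1 : c1 = 0 := by linarith
    have e2 : c2 = 0 := by linarith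
    have e0 : c0 = 1 := by linarith
    apply hxU
    rw [hxe, e0, e1, e2]
    simp
  · have hune : c1 + c2 ≠ 0 := ne_of_gt hu
    set Z : ℝ × ℝ := (c1 / (c1 + c2)) • V + (c2 / (c1 + c2)) • W with hZdef
    have hZQ : Z ∈ Q := hQ hV hW (div_nonneg h1 (le_of_lt hu)) (div_nonneg h2 (le_of_lt hu))
      (by field_simp)
    rcases eq_or_lt_of_le h0 with hc0 | hc0
    · -- c0 = 0 : x on segment V W
      have hc1 : c1 ≠ 0 := by
        rintro rfl; apply hxW; rw [hxe, ← hc0]; simp; rw [show c2 = 1 by linarith]; simp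
      have hc2 : c2 ≠ 0 := by
        rintro rfl; apply hxV; rw [hxe, ← hc0]; simp; rw [show c1 = 1 by linarith]; simp
      have hseg : x ∈ openSegment ℝ V W :=
        ⟨c1, c2, lt_of_le_of_ne h1 (Ne.symm hc1), lt_of_le_of_ne h2 (Ne.symm hc2),
          by linarith, by rw [hxe, ← hc0]; simp⟩
      exact hxV ((hext hV hW hseg).symm)
    · -- c0 > 0
      have hc0lt : c0 < 1 := by linarith
      have hseg : x ∈ openSegment ℝ U Z := by
        refine ⟨c0, 1 - c0, hc0, by linarith, by ring, ?_⟩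
        rw [hxe, hZdef]
        have h12 : 1 - c0 = c1 + c2 := by linarith
        rw [h12, smul_add, smul_smul, smul_smul, mul_div_cancel₀ _ hune,
          mul_div_cancel₀ _ hune, add_assoc]
      exact hxU ((hext hU hZQ hseg).symm)

lemma indep {a b : ℤ × ℤ} (hD : det2 a b ≠ 0) {s t : ℝ}
    (h1 : s * a.1 + t * b.1 = 0) (h2 : s * a.2 + t * b.2 = 0) : s = 0 ∧ t = 0 := by
  have hD' : ((a.1 : ℝ) * b.2 - a.2 * b.1) ≠ 0 := by
    intro h
    apply hD
    have : ((det2 a b : ℤ) : ℝ) = 0 := by push_cast [det2]; linarith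
    exact_mod_cast this
  constructor
  · have : s * ((a.1 : ℝ) * b.2 - a.2 * b.1) = (b.2 : ℝ) * (s * a.1 + t * b.1) - b.1 * (s * a.2 + t * b.2) := by ring
    rw [h1, h2] at this
    simp at this
    rcases this with h | h
    · exact h
    · exact absurd h hD'
  · have : t * ((a.1 : ℝ) * b.2 - a.2 * b.1) = (a.1 : ℝ) * (s * a.2 + t * b.2) - a.2 * (s * a.1 + t * b.1) := by ring
    rw [h1, h2] at this
    simp at this
    rcases this with h | h
    · exact h
    · exact absurd h hD'


lemma exists_r {a b : ℤ × ℤ} (ha : a ≠ 0) (h : det2 a b = 0) :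
    ∃ r : ℝ, ((b.1 : ℝ), (b.2 : ℝ)) = r • (((a.1 : ℝ), (a.2 : ℝ)) : ℝ × ℝ) := by
  have hdet : (a.1 : ℝ) * b.2 = (a.2 : ℝ) * b.1 := by
    have h' : ((a.1 * b.2 - a.2 * b.1 : ℤ) : ℝ) = 0 := by
      rw [show a.1 * b.2 - a.2 * b.1 = det2 a b from rfl, h]; simp
    push_cast at h'
    linarith
  by_cases h1 : a.1 = 0
  · have h2 : a.2 ≠ 0 := by
      intro h2; exact ha (Prod.ext h1 h2)
    have h2' : (a.2 : ℝ) ≠ 0 := Int.cast_ne_zero.mpr h2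
    have hb1 : (b.1 : ℝ) = 0 := by
      rw [h1] at hdet; push_cast at hdet
      simp only [zero_mul] at hdet
      rcases mul_eq_zero.mp hdet.symm with hh | hh
      · exact absurd hh h2'
      · exact hh
    refine ⟨(b.2 : ℝ) / a.2, Prod.ext ?_ ?_⟩
    · simp only [Prod.smul_fst, smul_eq_mul]
      rw [h1, hb1]; push_cast; ring
    · simp only [Prod.smul_snd, smul_eq_mul]
      field_simp
  · have h1' : (a.1 : ℝ) ≠ 0 := Int.cast_ne_zero.mpr h1
    refine ⟨(b.1 : ℝ) / a.1, Prod.ext ?_ ?_⟩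
    · simp only [Prod.smul_fst, smul_eq_mul]
      field_simp
    · simp only [Prod.smul_snd, smul_eq_mul]
      field_simp
      linarith

lemma vec_eq (x y : ℤ × ℤ) :
    latticePt x - latticePt y = ((((x - y).1 : ℤ) : ℝ), (((x - y).2 : ℤ) : ℝ)) := by
  apply Prod.ext <;> simp [latticePt]

lemma det_ne_zero {Q : Set (ℝ × ℝ)} (hQ : Convex ℝ Q) {u v w : ℤ × ℤ}
    (huv : u ≠ v) (huw : u ≠ w) (hvw : v ≠ w)
    (hu : latticePt u ∈ Set.extremePoints ℝ Q)
    (hv : latticePt v ∈ Set.extremePoints ℝ Q)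
    (hw : latticePt w ∈ Set.extremePoints ℝ Q) :
    det2 (v - u) (w - u) ≠ 0 := by
  intro h
  set U := latticePt u
  set V := latticePt v
  set W := latticePt w
  have haz : v - u ≠ 0 := fun hh => huv (sub_eq_zero.mp hh).symm
  obtain ⟨r, hr⟩ := exists_r haz h
  have hWU : W - U = r • (V - U) := by
    rw [vec_eq w u, vec_eq v u, hr]
  have hr0 : r ≠ 0 := by
    rintro rfl
    rw [zero_smul, sub_eq_zero] at hWU
    exact huw (latticePt_injective hWU).symm
  have hr1 : r ≠ 1 := by
    rintro rfl
    rw [one_smul] at hWU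
    have hWV : W = V := by
      have h2 := congrArg (· + U) hWU
      simpa using h2
    exact hvw (latticePt_injective hWV).symm
  have hW' : W = U + r • (V - U) := by
    rw [← hWU]; abel
  have hUQ : U ∈ Q := hu.1
  have hVQ : V ∈ Q := hv.1
  have hWQ : W ∈ Q := hw.1
  have hUV : U ≠ V := fun hh => huv (latticePt_injective hh)
  have hUW : U ≠ W := fun hh => huw (latticePt_injective hh)
  have hVW : V ≠ W := fun hh => hvw (latticePt_injective hh)
  rcases lt_trichotomy r 0 with hneg | hzero | hpos
  · -- U is between V and W
    have h1r : (0:ℝ) < 1 - r := by linarith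
    have h1r' : (1:ℝ) - r ≠ 0 := ne_of_gt h1r
    have hcomb : U = (-r / (1 - r)) • V + (1 / (1 - r)) • W + (0:ℝ) • V := by
      rw [hW']
      match_scalars <;> field_simp <;> ring
    exact extreme_not_combo hQ hVQ hWQ hVQ hu
      (c0 := -r / (1 - r)) (c1 := 1 / (1 - r)) (c2 := 0)
      (div_nonneg (by linarith) (by linarith)) (div_nonneg (by linarith) (by linarith))
      le_rfl (by field_simp; ring) hcomb hUV hUW hUV
  · exact hr0 hzero
  · rcases lt_trichotomy r 1 with hlt | heq | hgt
    · -- W between U and V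
      have hcomb : W = (1 - r) • U + r • V + (0:ℝ) • U := by
        rw [hW']; match_scalars <;> ring
      exact extreme_not_combo hQ hUQ hVQ hUQ hw
        (c0 := 1 - r) (c1 := r) (c2 := 0)
        (by linarith) (by linarith) le_rfl (by ring) hcomb
        hUW.symm hVW.symm hUW.symm
    · exact hr1 heq
    · -- V between U and W
      have hrne : r ≠ 0 := hr0
      have hcomb : V = (1 - 1/r) • U + (1/r) • W + (0:ℝ) • U := by
        rw [hW']
        match_scalars <;> field_simp <;> ring
      have hrinv : (0:ℝ) < 1/r := by positivity
      have hinvle : 1/r ≤ 1 := by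
        rw [div_le_one (by linarith)]; linarith
      exact extreme_not_combo hQ hUQ hWQ hUQ hv
        (c0 := 1 - 1/r) (c1 := 1/r) (c2 := 0)
        (by linarith) (le_of_lt hrinv) le_rfl
        (by ring) hcomb hUV.symm hVW hUV.symm


lemma final_step {Q : Set (ℝ × ℝ)} (hQ : Convex ℝ Q)
    (hE : Q ∩ lattice2 ⊆ Set.extremePoints ℝ Q)
    {u v w : ℤ × ℤ} (hu : latticePt u ∈ Q) (hv : latticePt v ∈ Q) (hw : latticePt w ∈ Q)
    (hne : det2 (v - u) (w - u) ≠ 0) {p : ℤ × ℤ} {s t : ℝ}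
    (hs : 0 ≤ s) (ht : 0 ≤ t) (hst : s + t ≤ 1) (hstne : ¬(s = 0 ∧ t = 0))
    (hs1 : s < 1) (ht1 : t < 1)
    (hp1 : (p.1 : ℝ) = s * ((v - u).1 : ℤ) + t * ((w - u).1 : ℤ))
    (hp2 : (p.2 : ℝ) = s * ((v - u).2 : ℤ) + t * ((w - u).2 : ℤ)) : False := by
  set U := latticePt u with hUdef
  set V := latticePt v with hVdef
  set W := latticePt w with hWdef
  set x := latticePt (u + p) with hxdef
  have hp1' : (p.1 : ℝ) = s * ((v.1 : ℝ) - (u.1 : ℝ)) + t * ((w.1 : ℝ) - (u.1 : ℝ)) := by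
    rw [hp1]
    simp only [Prod.fst_sub]
    push_cast
    ring
  have hp2' : (p.2 : ℝ) = s * ((v.2 : ℝ) - (u.2 : ℝ)) + t * ((w.2 : ℝ) - (u.2 : ℝ)) := by
    rw [hp2]
    simp only [Prod.snd_sub]
    push_cast
    ring
  have hxeq : x = (1 - s - t) • U + s • V + t • W := by
    apply Prod.ext
    · simp only [hxdef, hUdef, hVdef, hWdef, latticePt, Prod.fst_add, Prod.smul_fst,
        smul_eq_mul]
      push_cast
      linarith [hp1']
    · simp only [hxdef, hUdef, hVdef, hWdef, latticePt, Prod.snd_add, Prod.smul_snd,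
        smul_eq_mul]
      push_cast
      linarith [hp2']
  have hxQ : x ∈ Q := by
    have hsub : ({U, V, W} : Set (ℝ × ℝ)) ⊆ Q := by
      intro z hz
      rcases hz with rfl | rfl | rfl
      · exact hu
      · exact hv
      · exact hw
    have := mem_hull3 (U := U) (V := V) (W := W) hs ht hst
    rw [← hxeq] at this
    exact convexHull_min hsub hQ this
  have hxext : x ∈ Set.extremePoints ℝ Q := hE ⟨hxQ, ⟨u + p, rfl⟩⟩
  have hxU : x ≠ U := by
    intro hh
    have hpz : p = 0 := by
      have h2 : u + p = u := latticePt_injective hh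
      simpa using h2
    rw [hpz] at hp1 hp2
    simp only [Prod.fst_zero, Prod.snd_zero, Int.cast_zero] at hp1 hp2
    obtain ⟨hs0, ht0⟩ := indep hne hp1.symm hp2.symm
    exact hstne ⟨hs0, ht0⟩
  have hxV : x ≠ V := by
    intro hh
    have hpv : p = v - u := by
      have h2 : u + p = v := latticePt_injective hh
      rw [← h2]; abel
    rw [hpv] at hp1 hp2
    have e1 : (s - 1) * ((v - u).1 : ℤ) + t * ((w - u).1 : ℤ) = 0 := by
      push_cast at hp1 ⊢
      linarith
    have e2 : (s - 1) * ((v - u).2 : ℤ) + t * ((w - u).2 : ℤ) = 0 := by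
      push_cast at hp2 ⊢
      linarith
    obtain ⟨hs0, _⟩ := indep hne e1 e2
    linarith
  have hxW : x ≠ W := by
    intro hh
    have hpw : p = w - u := by
      have h2 : u + p = w := latticePt_injective hh
      rw [← h2]; abel
    rw [hpw] at hp1 hp2
    have e1 : s * ((v - u).1 : ℤ) + (t - 1) * ((w - u).1 : ℤ) = 0 := by
      push_cast at hp1 ⊢
      linarith
    have e2 : s * ((v - u).2 : ℤ) + (t - 1) * ((w - u).2 : ℤ) = 0 := by
      push_cast at hp2 ⊢
      linarith
    obtain ⟨_, ht0⟩ := indep hne e1 e2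
    linarith
  exact extreme_not_combo hQ (hUdef ▸ hu) (hVdef ▸ hv) (hWdef ▸ hw) hxext
    (c0 := 1 - s - t) (c1 := s) (c2 := t)
    (by linarith) hs ht (by ring) hxeq hxU hxV hxW

lemma det_pm_one {Q : Set (ℝ × ℝ)} (hQ : Convex ℝ Q)
    (hE : Q ∩ lattice2 ⊆ Set.extremePoints ℝ Q)
    {u v w : ℤ × ℤ} (hu : latticePt u ∈ Q) (hv : latticePt v ∈ Q) (hw : latticePt w ∈ Q)
    (hne : det2 (v - u) (w - u) ≠ 0) :
    det2 (v - u) (w - u) = 1 ∨ det2 (v - u) (w - u) = -1 := by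
  by_contra hcon
  push_neg at hcon
  obtain ⟨hc1, hc2⟩ := hcon
  set a := v - u with hadef
  set b := w - u with hbdef
  set D := det2 a b with hDdef
  set E := |D| with hEdef
  have hDne : D ≠ 0 := hne
  have hE2 : 2 ≤ E := by
    rcases abs_cases D with ⟨hh, _⟩ | ⟨hh, _⟩ <;> rw [hEdef, hh] <;> omega
  have hEpos : (0:ℤ) < E := by omega
  have hdvdE : ∀ x : ℤ, D ∣ x ↔ E ∣ x := fun x => (abs_dvd D x).symm
  -- find m n
  obtain ⟨m, n, hd1, hd2, hmn⟩ :
      ∃ m n : ℤ, D ∣ (m * a.1 + n * b.1) ∧ D ∣ (m * a.2 + n * b.2) ∧ ¬(D ∣ m ∧ D ∣ n) := by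
    by_cases hcA : D ∣ a.2 ∧ D ∣ b.2
    · by_cases hcB : D ∣ a.1 ∧ D ∣ b.1
      · exfalso
        have h1 : D * D ∣ a.1 * b.2 := mul_dvd_mul hcB.1 hcA.2
        have h2 : D * D ∣ a.2 * b.1 := mul_dvd_mul hcA.1 hcB.2
        have h3 : D * D ∣ D := by
          rw [hDdef, det2]
          exact dvd_sub h1 h2
        have h4 : D.natAbs * D.natAbs ∣ D.natAbs := by
          rw [← Int.natAbs_mul]
          exact Int.natAbs_dvd_natAbs.mpr h3
        have h5 : D.natAbs * D.natAbs ≤ D.natAbs := Nat.le_of_dvd (by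
          have : D.natAbs ≠ 0 := Int.natAbs_ne_zero.mpr hDne
          omega) h4
        have h6 : 2 ≤ D.natAbs := by
          rw [hEdef, Int.abs_eq_natAbs] at hE2
          exact_mod_cast hE2
        nlinarith
      · refine ⟨-b.1, a.1, ?_, ?_, ?_⟩
        · have : -b.1 * a.1 + a.1 * b.1 = 0 := by ring
          rw [this]
          exact dvd_zero D
        · have : -b.1 * a.2 + a.1 * b.2 = D := by rw [hDdef, det2]; ring
          rw [this]
        · rintro ⟨hm, hn⟩
          exact hcB ⟨hn, (dvd_neg).mp hm⟩
    · refine ⟨b.2, -a.2, ?_, ?_, ?_⟩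
      · have : b.2 * a.1 + -a.2 * b.1 = D := by rw [hDdef, det2]; ring
        rw [this]
      · have : b.2 * a.2 + -a.2 * b.2 = 0 := by ring
        rw [this]
        exact dvd_zero D
      · rintro ⟨hm, hn⟩
        exact hcA ⟨(dvd_neg).mp hn, hm⟩
  set m' := m % E with hm'def
  set n' := n % E with hn'def
  have hm'0 : 0 ≤ m' := Int.emod_nonneg m (by omega)
  have hm'lt : m' < E := Int.emod_lt_of_pos m hEpos
  have hn'0 : 0 ≤ n' := Int.emod_nonneg n (by omega)
  have hn'lt : n' < E := Int.emod_lt_of_pos n hEpos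
  have hmm' : E ∣ m - m' := by
    rw [hm'def, Int.emod_def]
    exact ⟨m / E, by ring⟩
  have hnn' : E ∣ n - n' := by
    rw [hn'def, Int.emod_def]
    exact ⟨n / E, by ring⟩
  have hne0 : ¬(m' = 0 ∧ n' = 0) := by
    rintro ⟨hm0, hn0⟩
    apply hmn
    constructor
    · rw [hdvdE]
      exact Int.dvd_of_emod_eq_zero hm0
    · rw [hdvdE]
      exact Int.dvd_of_emod_eq_zero hn0
  have hP1 : E ∣ m' * a.1 + n' * b.1 := by
    have hrw : m' * a.1 + n' * b.1 = (m * a.1 + n * b.1) - ((m - m') * a.1 + (n - n') * b.1) := by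
      ring
    rw [hrw]
    exact dvd_sub ((hdvdE _).mp hd1) (dvd_add (hmm'.mul_right a.1) (hnn'.mul_right b.1))
  have hP2 : E ∣ m' * a.2 + n' * b.2 := by
    have hrw : m' * a.2 + n' * b.2 = (m * a.2 + n * b.2) - ((m - m') * a.2 + (n - n') * b.2) := by
      ring
    rw [hrw]
    exact dvd_sub ((hdvdE _).mp hd2) (dvd_add (hmm'.mul_right a.2) (hnn'.mul_right b.2))
  set p : ℤ × ℤ := ((m' * a.1 + n' * b.1) / E, (m' * a.2 + n' * b.2) / E) with hpdef
  set s : ℝ := (m' : ℝ) / (E : ℝ) with hsdef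
  set t : ℝ := (n' : ℝ) / (E : ℝ) with htdef
  have hEposR : (0:ℝ) < (E : ℝ) := by exact_mod_cast hEpos
  have hs0 : 0 ≤ s := div_nonneg (by exact_mod_cast hm'0) (le_of_lt hEposR)
  have ht0 : 0 ≤ t := div_nonneg (by exact_mod_cast hn'0) (le_of_lt hEposR)
  have hs1 : s < 1 := by
    rw [hsdef, div_lt_one hEposR]
    exact_mod_cast hm'lt
  have ht1 : t < 1 := by
    rw [htdef, div_lt_one hEposR]
    exact_mod_cast hn'lt
  have hstne : ¬(s = 0 ∧ t = 0) := by
    rintro ⟨hhs, hht⟩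
    apply hne0
    constructor
    · rw [hsdef, div_eq_zero_iff] at hhs
      rcases hhs with hh | hh
      · exact_mod_cast hh
      · exact absurd hh (ne_of_gt hEposR)
    · rw [htdef, div_eq_zero_iff] at hht
      rcases hht with hh | hh
      · exact_mod_cast hh
      · exact absurd hh (ne_of_gt hEposR)
  have hp1 : (p.1 : ℝ) = s * (a.1 : ℝ) + t * (b.1 : ℝ) := by
    obtain ⟨k, hk⟩ := hP1
    have hpk : p.1 = k := by
      rw [hpdef]
      simp only
      rw [hk, Int.mul_ediv_cancel_left _ (by omega : E ≠ 0)]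
    have hkR : (m' : ℝ) * a.1 + (n' : ℝ) * b.1 = (E : ℝ) * k := by exact_mod_cast congrArg (Int.cast : ℤ → ℝ) hk
    rw [hpk, hsdef, htdef]
    field_simp
    linarith
  have hp2 : (p.2 : ℝ) = s * (a.2 : ℝ) + t * (b.2 : ℝ) := by
    obtain ⟨k, hk⟩ := hP2
    have hpk : p.2 = k := by
      rw [hpdef]
      simp only
      rw [hk, Int.mul_ediv_cancel_left _ (by omega : E ≠ 0)]
    have hkR : (m' : ℝ) * a.2 + (n' : ℝ) * b.2 = (E : ℝ) * k := by exact_mod_cast congrArg (Int.cast : ℤ → ℝ) hk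
    rw [hpk, hsdef, htdef]
    field_simp
    linarith
  by_cases hcase : s + t ≤ 1
  · exact final_step hQ hE hu hv hw hne hs0 ht0 hcase hstne hs1 ht1 hp1 hp2
  · push_neg at hcase
    set q : ℤ × ℤ := a + b - p with hqdef
    have hq1 : (q.1 : ℝ) = (1 - s) * (a.1 : ℝ) + (1 - t) * (b.1 : ℝ) := by
      simp only [hqdef, Prod.fst_add, Prod.fst_sub]
      push_cast
      rw [hp1]
      ring
    have hq2 : (q.2 : ℝ) = (1 - s) * (a.2 : ℝ) + (1 - t) * (b.2 : ℝ) := by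
      simp only [hqdef, Prod.snd_add, Prod.snd_sub]
      push_cast
      rw [hp2]
      ring
    exact final_step hQ hE hu hv hw hne (by linarith) (by linarith) (by linarith)
      (by rintro ⟨hh, _⟩; linarith) (by linarith) (by linarith) hq1 hq2


noncomputable def affMap (α β γ δ e f : ℝ) : (ℝ × ℝ) →ᵃ[ℝ] (ℝ × ℝ) where
  toFun x := (α * x.1 + β * x.2 + e, γ * x.1 + δ * x.2 + f)
  linear := {
    toFun := fun x => (α * x.1 + β * x.2, γ * x.1 + δ * x.2)
    map_add' := by intro x y; apply Prod.ext <;> simp <;> ring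
    map_smul' := by intro c x; apply Prod.ext <;> simp [smul_eq_mul] <;> ring }
  map_vadd' := by intro p v; apply Prod.ext <;> simp <;> ring

lemma affMap_lattice (α β γ δ e f : ℤ) (z : ℤ × ℤ) :
    affMap (α : ℝ) (β : ℝ) (γ : ℝ) (δ : ℝ) (e : ℝ) (f : ℝ) (latticePt z)
      = latticePt (α * z.1 + β * z.2 + e, γ * z.1 + δ * z.2 + f) := by
  apply Prod.ext <;> simp [affMap, latticePt, AffineMap.coe_mk]

lemma cast_eq {x : ℤ × ℤ} {i j : ℤ} (h1 : x.1 = i) (h2 : x.2 = j) :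
    latticePt x = ((i : ℝ), (j : ℝ)) := by
  apply Prod.ext <;> simp [latticePt, h1, h2]

lemma equiv_tri_core (u a b : ℤ × ℤ) (α β γ δ : ℤ)
    (hdet : α * δ - β * γ = 1 ∨ α * δ - β * γ = -1)
    (ha1 : α * a.1 + β * a.2 = 1) (ha2 : γ * a.1 + δ * a.2 = 0)
    (hb1 : α * b.1 + β * b.2 = 0) (hb2 : γ * b.1 + δ * b.2 = 1) :
    UnimodEquiv (convexHull ℝ (latticePt '' ({u, u + a, u + b} : Set (ℤ × ℤ)))) stdTriangle := by
  refine ⟨α, β, γ, δ, -(α * u.1 + β * u.2), -(γ * u.1 + δ * u.2), hdet, ?_⟩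
  show stdTriangle = ⇑(affMap (α : ℝ) (β : ℝ) (γ : ℝ) (δ : ℝ)
    ((-(α * u.1 + β * u.2) : ℤ) : ℝ) ((-(γ * u.1 + δ * u.2) : ℤ) : ℝ)) '' _
  rw [Set.image_insert_eq, Set.image_insert_eq, Set.image_singleton,
    AffineMap.image_convexHull, Set.image_insert_eq, Set.image_insert_eq, Set.image_singleton,
    affMap_lattice, affMap_lattice, affMap_lattice]
  rw [cast_eq (i := 0) (j := 0) (by simp) (by simp),
    cast_eq (i := 1) (j := 0) (by simp [Prod.fst_add, Prod.snd_add]; linarith [ha1])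
      (by simp [Prod.fst_add, Prod.snd_add]; linarith [ha2]),
    cast_eq (i := 0) (j := 1) (by simp [Prod.fst_add, Prod.snd_add]; linarith [hb1])
      (by simp [Prod.fst_add, Prod.snd_add]; linarith [hb2])]
  norm_num [stdTriangle]

lemma equiv_sq_core (u a b : ℤ × ℤ) (α β γ δ : ℤ)
    (hdet : α * δ - β * γ = 1 ∨ α * δ - β * γ = -1)
    (ha1 : α * a.1 + β * a.2 = 1) (ha2 : γ * a.1 + δ * a.2 = 0)
    (hb1 : α * b.1 + β * b.2 = 0) (hb2 : γ * b.1 + δ * b.2 = 1) :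
    UnimodEquiv (convexHull ℝ (latticePt '' ({u, u + a, u + b, u + a + b} : Set (ℤ × ℤ))))
      unitSquare := by
  refine ⟨α, β, γ, δ, -(α * u.1 + β * u.2), -(γ * u.1 + δ * u.2), hdet, ?_⟩
  show unitSquare = ⇑(affMap (α : ℝ) (β : ℝ) (γ : ℝ) (δ : ℝ)
    ((-(α * u.1 + β * u.2) : ℤ) : ℝ) ((-(γ * u.1 + δ * u.2) : ℤ) : ℝ)) '' _
  rw [Set.image_insert_eq, Set.image_insert_eq, Set.image_insert_eq, Set.image_singleton,
    AffineMap.image_convexHull, Set.image_insert_eq, Set.image_insert_eq, Set.image_insert_eq,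
    Set.image_singleton, affMap_lattice, affMap_lattice, affMap_lattice, affMap_lattice]
  rw [cast_eq (i := 0) (j := 0) (by simp) (by simp),
    cast_eq (i := 1) (j := 0) (by simp [Prod.fst_add, Prod.snd_add]; linarith [ha1])
      (by simp [Prod.fst_add, Prod.snd_add]; linarith [ha2]),
    cast_eq (i := 0) (j := 1) (by simp [Prod.fst_add, Prod.snd_add]; linarith [hb1])
      (by simp [Prod.fst_add, Prod.snd_add]; linarith [hb2]),
    cast_eq (i := 1) (j := 1) (by simp [Prod.fst_add, Prod.snd_add]; linarith [ha1, hb1])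
      (by simp [Prod.fst_add, Prod.snd_add]; linarith [ha2, hb2])]
  norm_num [unitSquare]


lemma three_le_card {S : Finset (ℤ × ℤ)}
    (h : (interior (convexHull ℝ (latticePt '' (S : Set (ℤ × ℤ))))).Nonempty) :
    3 ≤ S.card := by
  by_contra hlt
  push_neg at hlt
  obtain ⟨x, y, hxy⟩ : ∃ x y : ℤ × ℤ, (S : Set (ℤ × ℤ)) ⊆ {x, y} := by
    have : S.card = 0 ∨ S.card = 1 ∨ S.card = 2 := by omega
    rcases this with h0 | h1 | h2
    · exact ⟨0, 0, by simp [Finset.card_eq_zero.mp h0]⟩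
    · obtain ⟨a, rfl⟩ := Finset.card_eq_one.mp h1
      exact ⟨a, a, by simp⟩
    · obtain ⟨a, b, -, rfl⟩ := Finset.card_eq_two.mp h2
      exact ⟨a, b, by simp⟩
  have hsub : latticePt '' (S : Set (ℤ × ℤ)) ⊆ {latticePt x, latticePt y} := by
    intro z hz
    obtain ⟨w, hw, rfl⟩ := hz
    rcases hxy hw with rfl | rfl
    · exact Or.inl rfl
    · exact Or.inr rfl
  have hcol : Collinear ℝ (latticePt '' (S : Set (ℤ × ℤ))) :=
    (collinear_pair ℝ (latticePt x) (latticePt y)).subset hsub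
  have htop := ((convex_convexHull ℝ _).interior_nonempty_iff_affineSpan_eq_top).mp h
  rw [affineSpan_convexHull] at htop
  have hvs : vectorSpan ℝ (latticePt '' (S : Set (ℤ × ℤ))) = ⊤ := by
    rw [← direction_affineSpan, htop]
    exact AffineSubspace.direction_top ℝ _ _
  have hrank := hcol
  rw [Collinear, hvs] at hrank
  rw [rank_top] at hrank
  have : Module.rank ℝ (ℝ × ℝ) = 2 := by
    rw [rank_prod, Module.rank_self]
    norm_num
  rw [this] at hrank
  norm_num at hrank

lemma inv_mat {a b : ℤ × ℤ} (h : det2 a b = 1 ∨ det2 a b = -1) :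
    ∃ α β γ δ : ℤ, (α * δ - β * γ = 1 ∨ α * δ - β * γ = -1) ∧
      α * a.1 + β * a.2 = 1 ∧ γ * a.1 + δ * a.2 = 0 ∧
      α * b.1 + β * b.2 = 0 ∧ γ * b.1 + δ * b.2 = 1 := by
  simp only [det2] at h
  rcases h with h | h
  · exact ⟨b.2, -b.1, -a.2, a.1, Or.inl (by linear_combination h),
      by linear_combination h, by ring, by ring, by linear_combination h⟩
  · exact ⟨-b.2, b.1, a.2, -a.1, Or.inr (by linear_combination h),
      by linear_combination -h, by ring, by ring, by linear_combination -h⟩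

lemma cramer (a b c : ℤ × ℤ) :
    det2 a b • c = det2 c b • a + det2 a c • b := by
  apply Prod.ext <;>
    simp only [det2, Prod.smul_fst, Prod.smul_snd, Prod.fst_add, Prod.snd_add, smul_eq_mul] <;>
    ring



/-- For distinct lattice extreme points, the determinant is `±1`. -/
lemma det_unit {Q : Set (ℝ × ℝ)} (hQ : Convex ℝ Q)
    (hE : Q ∩ lattice2 ⊆ Set.extremePoints ℝ Q)
    {u v w : ℤ × ℤ} (hu : latticePt u ∈ Q) (hv : latticePt v ∈ Q) (hw : latticePt w ∈ Q)
    (huv : u ≠ v) (huw : u ≠ w) (hvw : v ≠ w) :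
    det2 (v - u) (w - u) = 1 ∨ det2 (v - u) (w - u) = -1 :=
  det_pm_one hQ hE hu hv hw
    (det_ne_zero hQ huv huw hvw (hE ⟨hu, ⟨u, rfl⟩⟩) (hE ⟨hv, ⟨v, rfl⟩⟩) (hE ⟨hw, ⟨w, rfl⟩⟩))

lemma pq_rel {Q : Set (ℝ × ℝ)} (hQ : Convex ℝ Q)
    (hE : Q ∩ lattice2 ⊆ Set.extremePoints ℝ Q)
    {A B C D : ℤ × ℤ}
    (hA : latticePt A ∈ Q) (hB : latticePt B ∈ Q) (hC : latticePt C ∈ Q) (hD : latticePt D ∈ Q)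
    (hAB : A ≠ B) (hAC : A ≠ C) (hAD : A ≠ D)
    (hBC : B ≠ C) (hBD : B ≠ D) (hCD : C ≠ D) :
    ∃ p q : ℤ, (p = 1 ∨ p = -1) ∧ (q = 1 ∨ q = -1) ∧ (p + q = 0 ∨ p + q = 2) ∧
      D - A = p • (B - A) + q • (C - A) := by
  set a := B - A with hadef
  set b := C - A with hbdef
  set c := D - A with hcdef
  have hε : det2 a b = 1 ∨ det2 a b = -1 := det_unit hQ hE hA hB hC hAB hAC hBC
  have hcb : det2 c b = 1 ∨ det2 c b = -1 := det_unit hQ hE hA hD hC hAD hAC (Ne.symm hCD)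
  have hac : det2 a c = 1 ∨ det2 a c = -1 := det_unit hQ hE hA hB hD hAB hAD hBD
  have hthird : det2 (b - a) (c - a) = 1 ∨ det2 (b - a) (c - a) = -1 := by
    have h1 : b - a = C - B := by rw [hadef, hbdef]; abel
    have h2 : c - a = D - B := by rw [hadef, hcdef]; abel
    rw [h1, h2]
    exact det_unit hQ hE hB hC hD hBC hBD hCD
  have hε2 : det2 a b * det2 a b = 1 := by rcases hε with h | h <;> rw [h] <;> norm_num
  have rel : c = (det2 a b * det2 c b) • a + (det2 a b * det2 a c) • b := by
    have h2 := congrArg (fun z => det2 a b • z) (cramer a b c)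
    simp only [smul_smul, smul_add] at h2
    rw [hε2, one_smul] at h2
    exact h2
  refine ⟨det2 a b * det2 c b, det2 a b * det2 a c, ?_, ?_, ?_, rel⟩
  · rcases hε with h | h <;> rcases hcb with h' | h' <;> rw [h, h'] <;> norm_num
  · rcases hε with h | h <;> rcases hac with h' | h' <;> rw [h, h'] <;> norm_num
  · set p := det2 a b * det2 c b with hpdef
    set q := det2 a b * det2 a c with hqdef
    have hexp : det2 (b - a) (c - a) = (1 - p - q) * det2 a b := by
      rw [rel]
      simp only [det2, Prod.fst_sub, Prod.snd_sub, Prod.fst_add, Prod.snd_add,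
        Prod.smul_fst, Prod.smul_snd, smul_eq_mul, hpdef, hqdef]
      ring
    have hp : p = 1 ∨ p = -1 := by
      rcases hε with h | h <;> rcases hcb with h' | h' <;> rw [hpdef, h, h'] <;> norm_num
    have hq : q = 1 ∨ q = -1 := by
      rcases hε with h | h <;> rcases hac with h' | h' <;> rw [hqdef, h, h'] <;> norm_num
    rcases hε with h | h <;> rw [h] at hexp <;> rcases hthird with h' | h' <;>
      rw [hexp] at h' <;> omega

lemma five_false {Q : Set (ℝ × ℝ)} (hQ : Convex ℝ Q)
    (hE : Q ∩ lattice2 ⊆ Set.extremePoints ℝ Q)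
    {A B C D E : ℤ × ℤ}
    (hA : latticePt A ∈ Q) (hB : latticePt B ∈ Q) (hC : latticePt C ∈ Q)
    (hD : latticePt D ∈ Q) (hE' : latticePt E ∈ Q)
    (hAB : A ≠ B) (hAC : A ≠ C) (hAD : A ≠ D) (hAE : A ≠ E)
    (hBC : B ≠ C) (hBD : B ≠ D) (hBE : B ≠ E)
    (hCD : C ≠ D) (hCE : C ≠ E) (hDE : D ≠ E) : False := by
  obtain ⟨p, q, hp, hq, hpq, rel⟩ := pq_rel hQ hE hA hB hC hD hAB hAC hAD hBC hBD hCD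
  obtain ⟨p', q', hp', hq', hpq', rel'⟩ := pq_rel hQ hE hA hB hC hE' hAB hAC hAE hBC hBE hCE
  have hε : det2 (B - A) (C - A) = 1 ∨ det2 (B - A) (C - A) = -1 :=
    det_unit hQ hE hA hB hC hAB hAC hBC
  have hde : det2 (D - A) (E - A) = 1 ∨ det2 (D - A) (E - A) = -1 :=
    det_unit hQ hE hA hD hE' hAD hAE hDE
  have hexp : det2 (D - A) (E - A) = (p * q' - q * p') * det2 (B - A) (C - A) := by
    rw [rel, rel']
    simp only [det2, Prod.fst_sub, Prod.snd_sub, Prod.fst_add, Prod.snd_add,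
      Prod.smul_fst, Prod.smul_snd, smul_eq_mul]
    ring
  rcases hp with rfl | rfl <;> rcases hq with rfl | rfl <;>
    rcases hp' with rfl | rfl <;> rcases hq' with rfl | rfl <;>
    rcases hε with h | h <;> rw [h] at hexp <;>
    rcases hde with h' | h' <;> rw [hexp] at h' <;> omega


lemma tri_case {Q : Set (ℝ × ℝ)} (hQ : Convex ℝ Q)
    (hE : Q ∩ lattice2 ⊆ Set.extremePoints ℝ Q)
    {A B C : ℤ × ℤ}
    (hA : latticePt A ∈ Q) (hB : latticePt B ∈ Q) (hC : latticePt C ∈ Q)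
    (hAB : A ≠ B) (hAC : A ≠ C) (hBC : B ≠ C)
    (hull : Q = convexHull ℝ (latticePt '' ({A, B, C} : Set (ℤ × ℤ)))) :
    UnimodEquiv Q stdTriangle := by
  obtain ⟨α, β, γ, δ, h0, h1, h2, h3, h4⟩ := inv_mat (det_unit hQ hE hA hB hC hAB hAC hBC)
  have hsets : ({A, B, C} : Set (ℤ × ℤ)) = {A, A + (B - A), A + (C - A)} := by
    have e1 : A + (B - A) = B := by abel
    have e2 : A + (C - A) = C := by abel
    rw [e1, e2]
  rw [hull, hsets]
  exact equiv_tri_core A (B - A) (C - A) α β γ δ h0 h1 h2 h3 h4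

lemma quad_case {Q : Set (ℝ × ℝ)} (hQ : Convex ℝ Q)
    (hE : Q ∩ lattice2 ⊆ Set.extremePoints ℝ Q)
    {A B C D : ℤ × ℤ}
    (hA : latticePt A ∈ Q) (hB : latticePt B ∈ Q) (hC : latticePt C ∈ Q) (hD : latticePt D ∈ Q)
    (hAB : A ≠ B) (hAC : A ≠ C) (hAD : A ≠ D)
    (hBC : B ≠ C) (hBD : B ≠ D) (hCD : C ≠ D)
    (hull : Q = convexHull ℝ (latticePt '' ({A, B, C, D} : Set (ℤ × ℤ)))) :
    UnimodEquiv Q unitSquare := by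
  obtain ⟨p, q, hp, hq, hpq, rel⟩ := pq_rel hQ hE hA hB hC hD hAB hAC hAD hBC hBD hCD
  rcases hp with rfl | rfl <;> rcases hq with rfl | rfl
  · -- p = 1, q = 1
    obtain ⟨α, β, γ, δ, h0, h1, h2, h3, h4⟩ := inv_mat (det_unit hQ hE hA hB hC hAB hAC hBC)
    simp only [one_smul] at rel
    have e3 : A + (B - A) + (C - A) = D := by
      have h5 := eq_add_of_sub_eq rel
      rw [h5]; abel
    have hsets : ({A, B, C, D} : Set (ℤ × ℤ))
        = {A, A + (B - A), A + (C - A), A + (B - A) + (C - A)} := by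
      have e1 : A + (B - A) = B := by abel
      have e2 : A + (C - A) = C := by abel
      rw [e3, e1, e2]
    rw [hull, hsets]
    exact equiv_sq_core A (B - A) (C - A) α β γ δ h0 h1 h2 h3 h4
  · -- p = 1, q = -1 : use basis (C-A, D-A), fourth point B
    obtain ⟨α, β, γ, δ, h0, h1, h2, h3, h4⟩ :=
      inv_mat (det_unit hQ hE hA hC hD hAC hAD hCD)
    simp only [one_smul, neg_smul] at rel
    have e3 : A + (C - A) + (D - A) = B := by
      have h5 := eq_add_of_sub_eq rel
      rw [h5]; abel
    have hsets : ({A, B, C, D} : Set (ℤ × ℤ))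
        = {A, A + (C - A), A + (D - A), A + (C - A) + (D - A)} := by
      have e1 : A + (C - A) = C := by abel
      have e2 : A + (D - A) = D := by abel
      rw [e3, e1, e2]
      ext z
      simp only [Set.mem_insert_iff, Set.mem_singleton_iff]
      tauto
    rw [hull, hsets]
    exact equiv_sq_core A (C - A) (D - A) α β γ δ h0 h1 h2 h3 h4
  · -- p = -1, q = 1 : use basis (B-A, D-A), fourth point C
    obtain ⟨α, β, γ, δ, h0, h1, h2, h3, h4⟩ :=
      inv_mat (det_unit hQ hE hA hB hD hAB hAD hBD)
    simp only [one_smul, neg_smul] at rel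
    have e3 : A + (B - A) + (D - A) = C := by
      have h5 := eq_add_of_sub_eq rel
      rw [h5]; abel
    have hsets : ({A, B, C, D} : Set (ℤ × ℤ))
        = {A, A + (B - A), A + (D - A), A + (B - A) + (D - A)} := by
      have e1 : A + (B - A) = B := by abel
      have e2 : A + (D - A) = D := by abel
      rw [e3, e1, e2]
      ext z
      simp only [Set.mem_insert_iff, Set.mem_singleton_iff]
      tauto
    rw [hull, hsets]
    exact equiv_sq_core A (B - A) (D - A) α β γ δ h0 h1 h2 h3 h4
  · omega


end EPC

/-- Every empty lattice polygon in `ℝ²` is unimodularly equivalent either to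
the standard triangle or to the unit square. -/
theorem empty_polygon_classification (Q : Set (ℝ × ℝ))
    (hQ : IsLatticePolygon Q) (hQe : IsEmptyPolygon Q) :
    UnimodEquiv Q stdTriangle ∨ UnimodEquiv Q unitSquare := by
  obtain ⟨⟨S, hS⟩, hint⟩ := hQ
  have hconv : Convex ℝ Q := by rw [hS]; exact convex_convexHull ℝ _
  have hE : Q ∩ lattice2 ⊆ Set.extremePoints ℝ Q := le_of_eq hQe
  have hmem : ∀ z ∈ S, latticePt z ∈ Q := fun z hz => by
    rw [hS]; exact subset_convexHull ℝ _ ⟨z, hz, rfl⟩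
  have h3 : 3 ≤ S.card := EPC.three_le_card (by rw [← hS]; exact hint)
  by_cases h5 : 5 ≤ S.card
  · exfalso
    obtain ⟨T, hTsub, hT5⟩ := Finset.exists_subset_card_eq h5
    rw [show (5 : ℕ) = 4 + 1 from rfl, Finset.card_eq_succ] at hT5
    obtain ⟨A, T4, hAT, rfl, hT4⟩ := hT5
    rw [show (4 : ℕ) = 3 + 1 from rfl, Finset.card_eq_succ] at hT4
    obtain ⟨B, T3, hBT, rfl, hT3⟩ := hT4
    obtain ⟨C, D, E, hCD, hCE, hDE, rfl⟩ := Finset.card_eq_three.mp hT3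
    have hABm : A ∉ insert B ({C, D, E} : Finset (ℤ × ℤ)) := hAT
    simp only [Finset.mem_insert, Finset.mem_singleton, not_or] at hABm hBT
    have hmm : ∀ z ∈ insert A (insert B ({C, D, E} : Finset (ℤ × ℤ))), latticePt z ∈ Q :=
      fun z hz => hmem z (hTsub hz)
    exact EPC.five_false hconv hE
      (hmm A (by simp)) (hmm B (by simp)) (hmm C (by simp)) (hmm D (by simp)) (hmm E (by simp))
      hABm.1 hABm.2.1 hABm.2.2.1 hABm.2.2.2 hBT.1 hBT.2.1 hBT.2.2 hCD hCE hDE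
  · by_cases h4 : S.card = 4
    · right
      rw [show (4 : ℕ) = 3 + 1 from rfl, Finset.card_eq_succ] at h4
      obtain ⟨A, T3, hAT, rfl, hT3⟩ := h4
      obtain ⟨B, C, D, hBC, hBD, hCD, rfl⟩ := Finset.card_eq_three.mp hT3
      simp only [Finset.mem_insert, Finset.mem_singleton, not_or] at hAT
      have hmm : ∀ z ∈ insert A ({B, C, D} : Finset (ℤ × ℤ)), latticePt z ∈ Q := hmem
      refine EPC.quad_case hconv hE
        (hmm A (by simp)) (hmm B (by simp)) (hmm C (by simp)) (hmm D (by simp))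
        hAT.1 hAT.2.1 hAT.2.2 hBC hBD hCD ?_
      rw [hS]
      congr 1
      simp [Set.insert_comm]
    · left
      have h3' : S.card = 3 := by omega
      obtain ⟨A, B, C, hAB, hAC, hBC, rfl⟩ := Finset.card_eq_three.mp h3'
      have hmm : ∀ z ∈ ({A, B, C} : Finset (ℤ × ℤ)), latticePt z ∈ Q := hmem
      refine EPC.tri_case hconv hE
        (hmm A (by simp)) (hmm B (by simp)) (hmm C (by simp)) hAB hAC hBC ?_
      rw [hS]
      congr 1
      simp
end

section
/- Every hollow lattice polygon in ℝ² is unimodularly equivalent either to twice the standard triangle, conv{(0,0),(2,0),(0,2)}, or to a lattice polygon contained in the strip ℝ × [0,1] (a Cayley product of two line segments). -/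
/-- A lattice polygon is hollow if its interior contains no lattice point. -/
def IsHollow (P : Set (ℝ × ℝ)) : Prop :=
  ∀ p : ℤ × ℤ, latticePt p ∉ interior P

/-- Twice the standard triangle, `conv{(0,0),(2,0),(0,2)}`. -/
def twiceStdTriangle : Set (ℝ × ℝ) :=
  convexHull ℝ {((0 : ℝ), (0 : ℝ)), ((2 : ℝ), (0 : ℝ)), ((0 : ℝ), (2 : ℝ))}

/-!
Induct on the height `w` of `Q`, the length of the range of its second coordinate. The points of
`Q` on a row `ℝ × {k}` with `0 < k < w` that lie strictly between two other such points are
interior, so hollowness forbids an integer strictly between two points of such a row.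
After a shear, a reflection and a translation, the bottom row of `Q` is `[0, β] × {0}` and the top
row is `[m, m + τ] × {w}`, with `τ ≤ β` and `-w < 2m ≤ w`. Comparing the two chords from the bottom
to the top row at height `1` gives `(w - 1) β + τ ≤ w`, and every lattice point at height `k`
lies within `1` of the chord point `k m / w`. For `w ≥ 3`, and for `w = 2` unless `Q = 2Δ`, this
puts all lattice points of `Q` into `w` consecutive columns, so swapping the coordinates lowers the
height. Height `1` is the strip, and height `0` leaves no interior.
-/

open Set

structure UnimodMap where
  (a b c d e f : ℤ)
  det_eq : a * d - b * c = 1 ∨ a * d - b * c = -1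

namespace UnimodMap

variable (g h : UnimodMap)

instance : CoeFun UnimodMap fun _ => ℝ × ℝ → ℝ × ℝ :=
  ⟨fun g x => ((g.a : ℝ) * x.1 + (g.b : ℝ) * x.2 + (g.e : ℝ),
    (g.c : ℝ) * x.1 + (g.d : ℝ) * x.2 + (g.f : ℝ))⟩

def onLattice (p : ℤ × ℤ) : ℤ × ℤ := (g.a * p.1 + g.b * p.2 + g.e, g.c * p.1 + g.d * p.2 + g.f)

lemma apply_latticePt (p : ℤ × ℤ) : g (latticePt p) = latticePt (g.onLattice p) := by
  simp [latticePt, onLattice]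

lemma det_mul_self : (g.a * g.d - g.b * g.c) * (g.a * g.d - g.b * g.c) = 1 := by
  rcases g.det_eq with h | h <;> rw [h] <;> norm_num

/-- The inverse map `x ↦ A⁻¹ (x - c)`; since `det A = ±1`, `A⁻¹ = det A • adj A` is integral. -/
def symm : UnimodMap where
  a := (g.a * g.d - g.b * g.c) * g.d
  b := -((g.a * g.d - g.b * g.c) * g.b)
  c := -((g.a * g.d - g.b * g.c) * g.c)
  d := (g.a * g.d - g.b * g.c) * g.a
  e := -((g.a * g.d - g.b * g.c) * (g.d * g.e - g.b * g.f))
  f := -((g.a * g.d - g.b * g.c) * (g.a * g.f - g.c * g.e))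
  det_eq := by
    have h := g.det_mul_self
    rcases g.det_eq with hδ | hδ
    · left; linear_combination (g.a * g.d - g.b * g.c) * h + hδ
    · right; linear_combination (g.a * g.d - g.b * g.c) * h + hδ

lemma symm_apply_apply (x : ℝ × ℝ) : g.symm (g x) = x := by
  have h : ((g.a : ℝ) * g.d - g.b * g.c) * (g.a * g.d - g.b * g.c) = 1 := by
    exact_mod_cast g.det_mul_self
  simp only [symm, Prod.ext_iff]
  push_cast
  constructor
  · linear_combination x.1 * h
  · linear_combination x.2 * h

lemma apply_symm_apply (x : ℝ × ℝ) : g (g.symm x) = x := by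
  have h : ((g.a : ℝ) * g.d - g.b * g.c) * (g.a * g.d - g.b * g.c) = 1 := by
    exact_mod_cast g.det_mul_self
  simp only [symm, Prod.ext_iff]
  push_cast
  constructor
  · linear_combination (x.1 - g.e) * h
  · linear_combination (x.2 - g.f) * h

lemma continuous : Continuous g := by
  fun_prop

def toHomeomorph : (ℝ × ℝ) ≃ₜ (ℝ × ℝ) where
  toFun := g
  invFun := g.symm
  left_inv := g.symm_apply_apply
  right_inv := g.apply_symm_apply
  continuous_toFun := g.continuous
  continuous_invFun := g.symm.continuous

lemma image_interior (s : Set (ℝ × ℝ)) : g '' interior s = interior (g '' s) :=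
  g.toHomeomorph.image_interior s

noncomputable def toAffineMap : (ℝ × ℝ) →ᵃ[ℝ] (ℝ × ℝ) :=
  AffineMap.mk' g
    (((g.a : ℝ) • LinearMap.fst ℝ ℝ ℝ + (g.b : ℝ) • LinearMap.snd ℝ ℝ ℝ).prod
      ((g.c : ℝ) • LinearMap.fst ℝ ℝ ℝ + (g.d : ℝ) • LinearMap.snd ℝ ℝ ℝ)) 0
    (fun x => by simp)

lemma image_convexHull (s : Set (ℝ × ℝ)) : g '' convexHull ℝ s = convexHull ℝ (g '' s) :=
  g.toAffineMap.image_convexHull s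

def comp : UnimodMap where
  a := g.a * h.a + g.b * h.c
  b := g.a * h.b + g.b * h.d
  c := g.c * h.a + g.d * h.c
  d := g.c * h.b + g.d * h.d
  e := g.a * h.e + g.b * h.f + g.e
  f := g.c * h.e + g.d * h.f + g.f
  det_eq := by
    have key : (g.a * h.a + g.b * h.c) * (g.c * h.b + g.d * h.d)
        - (g.a * h.b + g.b * h.d) * (g.c * h.a + g.d * h.c)
        = (g.a * g.d - g.b * g.c) * (h.a * h.d - h.b * h.c) := by ring
    rw [key]
    rcases g.det_eq with hg | hg <;> rcases h.det_eq with hh | hh <;> simp [hg, hh]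

lemma comp_apply (x : ℝ × ℝ) : g.comp h x = g (h x) := by
  simp only [comp, Prod.ext_iff]
  push_cast
  constructor <;> ring

end UnimodMap

lemma unimodEquiv_iff {A B : Set (ℝ × ℝ)} : UnimodEquiv A B ↔ ∃ g : UnimodMap, B = g '' A :=
  ⟨fun ⟨a, b, c, d, e, f, h, hB⟩ => ⟨⟨a, b, c, d, e, f, h⟩, hB⟩,
    fun ⟨g, hB⟩ => ⟨g.a, g.b, g.c, g.d, g.e, g.f, g.det_eq, hB⟩⟩

lemma UnimodEquiv.trans {A B C : Set (ℝ × ℝ)} (hAB : UnimodEquiv A B) (hBC : UnimodEquiv B C) :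
    UnimodEquiv A C := by
  obtain ⟨g, rfl⟩ := unimodEquiv_iff.1 hAB
  obtain ⟨h, rfl⟩ := unimodEquiv_iff.1 hBC
  exact unimodEquiv_iff.2 ⟨h.comp g, by rw [image_image]; simp only [UnimodMap.comp_apply]⟩

lemma UnimodEquiv.refl (A : Set (ℝ × ℝ)) : UnimodEquiv A A :=
  unimodEquiv_iff.2 ⟨⟨1, 0, 0, 1, 0, 0, Or.inl (by norm_num)⟩, by simp⟩

def latticeHull (S : Finset (ℤ × ℤ)) : Set (ℝ × ℝ) := convexHull ℝ (latticePt '' (S : Set (ℤ × ℤ)))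

lemma latticePt_mem_latticeHull {S : Finset (ℤ × ℤ)} {p : ℤ × ℤ} (hp : p ∈ S) :
    latticePt p ∈ latticeHull S :=
  subset_convexHull ℝ _ ⟨p, hp, rfl⟩

def IsStandardHollow (Q : Set (ℝ × ℝ)) : Prop :=
  Q = twiceStdTriangle ∨ IsLatticePolygon Q ∧ Q ⊆ (univ : Set ℝ) ×ˢ Icc (0 : ℝ) 1

namespace UnimodMap

variable (g : UnimodMap)

lemma unimodEquiv_image (A : Set (ℝ × ℝ)) : UnimodEquiv A (g '' A) :=
  unimodEquiv_iff.2 ⟨g, rfl⟩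

lemma image_latticeHull (S : Finset (ℤ × ℤ)) :
    g '' latticeHull S = latticeHull (S.image g.onLattice) := by
  rw [latticeHull, latticeHull, g.image_convexHull, Finset.coe_image, image_image, image_image]
  simp only [g.apply_latticePt]

lemma interior_latticeHull_image_nonempty {S : Finset (ℤ × ℤ)}
    (h : (interior (latticeHull S)).Nonempty) :
    (interior (latticeHull (S.image g.onLattice))).Nonempty := by
  rw [← g.image_latticeHull, ← g.image_interior]
  exact h.image g

lemma isHollow_latticeHull_image {S : Finset (ℤ × ℤ)} (h : IsHollow (latticeHull S)) :
    IsHollow (latticeHull (S.image g.onLattice)) := by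
  rw [← g.image_latticeHull]
  intro p hp
  rw [← g.image_interior] at hp
  obtain ⟨z, hz, hzp⟩ := hp
  have : z = latticePt (g.symm.onLattice p) := by
    rw [← g.symm.apply_latticePt, ← hzp, g.symm_apply_apply]
  exact h _ (this ▸ hz)

lemma exists_standard_of_image {S : Finset (ℤ × ℤ)}
    (h : ∃ Q', UnimodEquiv (latticeHull (S.image g.onLattice)) Q' ∧ IsStandardHollow Q') :
    ∃ Q', UnimodEquiv (latticeHull S) Q' ∧ IsStandardHollow Q' := by
  obtain ⟨Q', hQ', hstd⟩ := h
  rw [← g.image_latticeHull] at hQ'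
  exact ⟨Q', (g.unimodEquiv_image _).trans hQ', hstd⟩

end UnimodMap

lemma exists_mem_openSegment_snd_eq {a b : ℝ × ℝ} {t : ℝ} (ht : t ∈ openSegment ℝ a.2 b.2) :
    ∃ v ∈ openSegment ℝ a b, v.2 = t := by
  rwa [← show _ = openSegment ℝ a.2 b.2 from
    image_openSegment ℝ (LinearMap.snd ℝ ℝ ℝ).toAffineMap a b] at ht

lemma Convex.exists_mem_interior_snd_eq {Q : Set (ℝ × ℝ)} (hQ : Convex ℝ Q)
    (hint : (interior Q).Nonempty) {r s : ℝ × ℝ} (hr : r ∈ Q) (hs : s ∈ Q) {t : ℝ}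
    (hrt : r.2 < t) (hts : t < s.2) : ∃ u ∈ interior Q, u.2 = t := by
  obtain ⟨u, hu⟩ := hint
  rcases lt_trichotomy u.2 t with hut | rfl | htu
  · obtain ⟨v, hv, hvt⟩ := exists_mem_openSegment_snd_eq (a := u) (b := s)
      (by rw [openSegment_eq_Ioo (hut.trans hts)]; exact ⟨hut, hts⟩)
    exact ⟨v, hQ.openSegment_interior_self_subset_interior hu hs hv, hvt⟩
  · exact ⟨u, hu, rfl⟩
  · obtain ⟨v, hv, hvt⟩ := exists_mem_openSegment_snd_eq (a := u) (b := r)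
      (by rw [openSegment_symm, openSegment_eq_Ioo (hrt.trans htu)]; exact ⟨hrt, htu⟩)
    exact ⟨v, hQ.openSegment_interior_self_subset_interior hu hr hv, hvt⟩

lemma Convex.mk_mem_interior {Q : Set (ℝ × ℝ)} (hQ : Convex ℝ Q) {u z z' : ℝ × ℝ}
    (hu : u ∈ interior Q) (hz : z ∈ Q) (hz' : z' ∈ Q) {x t : ℝ} (hut : u.2 = t) (hzt : z.2 = t)
    (hz't : z'.2 = t) (hzx : z.1 < x) (hxz' : x < z'.1) : (x, t) ∈ interior Q := by
  have of_openSegment : ∀ y ∈ Q, y.2 = t → x ∈ openSegment ℝ u.1 y.1 → (x, t) ∈ interior Q := by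
    intro y hy hyt hx
    apply hQ.openSegment_interior_self_subset_interior hu hy
    rw [← Prod.mk.eta (p := u), ← Prod.mk.eta (p := y), hut, hyt,
      ← Prod.image_mk_openSegment_left]
    exact ⟨x, hx, rfl⟩
  rcases lt_trichotomy x u.1 with hxu | rfl | hux
  · refine of_openSegment z hz hzt ?_
    rw [openSegment_symm, openSegment_eq_Ioo (hzx.trans hxu)]
    exact ⟨hzx, hxu⟩
  · rwa [← hut]
  · refine of_openSegment z' hz' hz't ?_
    rw [openSegment_eq_Ioo (hux.trans hxz')]
    exact ⟨hux, hxz'⟩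

lemma IsHollow.fst_le_of_fst_lt {Q : Set (ℝ × ℝ)} (hhol : IsHollow Q) (hQ : Convex ℝ Q)
    (hint : (interior Q).Nonempty) {r s z z' : ℝ × ℝ} (hr : r ∈ Q) (hs : s ∈ Q) (hz : z ∈ Q)
    (hz' : z' ∈ Q) {k n : ℤ} (hrk : r.2 < k) (hks : k < s.2) (hzk : z.2 = k) (hz'k : z'.2 = k)
    (hzn : z.1 < n) : z'.1 ≤ n := by
  by_contra! hnz'
  obtain ⟨u, hu, huk⟩ := hQ.exists_mem_interior_snd_eq hint hr hs hrk hks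
  exact hhol (n, k) (hQ.mk_mem_interior hu hz hz' huk hzk hz'k hzn hnz')

lemma IsHollow.abs_sub_le_one {Q : Set (ℝ × ℝ)} (hhol : IsHollow Q) (hQ : Convex ℝ Q)
    (hint : (interior Q).Nonempty) {r s c : ℝ × ℝ} (hr : r ∈ Q) (hs : s ∈ Q) (hc : c ∈ Q)
    {p : ℤ × ℤ} (hp : latticePt p ∈ Q) (hrp : r.2 < p.2) (hps : p.2 < s.2) (hcp : c.2 = p.2) :
    |(p.1 : ℝ) - c.1| ≤ 1 := by
  rw [abs_le]
  constructor
  · have := hhol.fst_le_of_fst_lt hQ hint hr hs hp hc hrp hps rfl hcp (n := p.1 + 1)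
      (by push_cast; exact lt_add_one _)
    push_cast at this
    linarith
  · by_contra! h
    have := hhol.fst_le_of_fst_lt hQ hint hr hs hc hp hrp hps hcp rfl (n := p.1 - 1)
      (by push_cast; linarith)
    push_cast at this
    change (p.1 : ℝ) ≤ p.1 - 1 at this
    linarith

lemma chord_mem_latticeHull {S : Finset (ℤ × ℤ)} {p q : ℤ × ℤ} (hp : p ∈ S) (hq : q ∈ S)
    {w k : ℤ} (hw : 0 < w) (hp2 : p.2 = 0) (hq2 : q.2 = w) (hk0 : 0 ≤ k) (hkw : k ≤ w) :
    ((((w - k) * p.1 + k * q.1 : ℤ) : ℝ) / w, (k : ℝ)) ∈ latticeHull S := by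
  have hwR : (0 : ℝ) < w := by exact_mod_cast hw
  have hkR : (k : ℝ) / w ≤ 1 := by rw [div_le_one hwR]; exact_mod_cast hkw
  convert convex_convexHull ℝ _ (latticePt_mem_latticeHull hp) (latticePt_mem_latticeHull hq)
    (sub_nonneg.2 hkR) (by positivity) (sub_add_cancel 1 ((k : ℝ) / w)) using 1
  · rfl
  · rw [Prod.ext_iff]
    simp only [latticePt, hp2, hq2, Prod.smul_mk, Prod.mk_add_mk, smul_eq_mul]
    push_cast
    constructor
    · field_simp
    · field_simp
      ring

lemma abs_mul_sub_le_of_abs_sub_div_le {w x a : ℤ} (hw : 0 < w)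
    (h : |(x : ℝ) - (a : ℝ) / w| ≤ 1) : |w * x - a| ≤ w := by
  have hwR : (0 : ℝ) < w := by exact_mod_cast hw
  rw [show (x : ℝ) - a / w = (w * x - a : ℤ) / (w : ℝ) by push_cast; field_simp, abs_div,
    abs_of_pos hwR, div_le_one hwR] at h
  exact_mod_cast h

lemma IsHollow.abs_sub_chord_le {S : Finset (ℤ × ℤ)} (hhol : IsHollow (latticeHull S))
    (hint : (interior (latticeHull S)).Nonempty) {w : ℤ} {p : ℤ × ℤ} (hp : p ∈ S)
    (hp0 : 0 < p.2) (hpw : p.2 < w) {a b : ℤ} (ha : (a, 0) ∈ S) (hb : (b, w) ∈ S) :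
    |w * p.1 - ((w - p.2) * a + p.2 * b)| ≤ w := by
  refine abs_mul_sub_le_of_abs_sub_div_le (hp0.trans hpw) ?_
  exact hhol.abs_sub_le_one (convex_convexHull ℝ _) hint (latticePt_mem_latticeHull ha)
    (latticePt_mem_latticeHull hb)
    (chord_mem_latticeHull ha hb (hp0.trans hpw) rfl rfl hp0.le hpw.le)
    (latticePt_mem_latticeHull hp) (by simpa [latticePt] using hp0)
    (by simpa [latticePt] using hpw) rfl

lemma twiceStdTriangle_eq :
    twiceStdTriangle = {z : ℝ × ℝ | 0 ≤ z.1 ∧ 0 ≤ z.2 ∧ z.1 + z.2 ≤ 2} := by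
  apply Subset.antisymm
  · refine convexHull_min ?_ ?_
    · rintro z (rfl | rfl | rfl) <;> norm_num
    · intro x hx y hy a b ha hb hab
      simp only [mem_ofPred_eq, Prod.fst_add, Prod.snd_add, Prod.smul_fst, Prod.smul_snd,
        smul_eq_mul] at hx hy ⊢
      refine ⟨by nlinarith, by nlinarith, by nlinarith⟩
  · rintro z ⟨h1, h2, h3⟩
    show z ∈ convexHull ℝ _
    have := (convex_convexHull ℝ
      {((0 : ℝ), (0 : ℝ)), ((2 : ℝ), (0 : ℝ)), ((0 : ℝ), (2 : ℝ))}).sum_mem (t := Finset.univ)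
      (w := ![1 - (z.1 + z.2) / 2, z.1 / 2, z.2 / 2])
      (z := ![((0 : ℝ), (0 : ℝ)), ((2 : ℝ), (0 : ℝ)), ((0 : ℝ), (2 : ℝ))])
      (by intro i _; fin_cases i <;> simp <;> linarith)
      (by simp [Fin.sum_univ_three]; ring)
      (by intro i _; fin_cases i <;> exact subset_convexHull ℝ _ (by simp))
    convert this using 1
    ext <;> simp [Fin.sum_univ_three]

lemma latticeHull_eq_twiceStdTriangle {S : Finset (ℤ × ℤ)} (h₀ : ((0, 0) : ℤ × ℤ) ∈ S)
    (h₁ : ((2, 0) : ℤ × ℤ) ∈ S) (h₂ : ((0, 2) : ℤ × ℤ) ∈ S)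
    (hS : ∀ p ∈ S, 0 ≤ p.1 ∧ 0 ≤ p.2 ∧ p.1 + p.2 ≤ 2) : latticeHull S = twiceStdTriangle := by
  apply Subset.antisymm
  · refine convexHull_min ?_ (convex_convexHull ℝ _)
    rintro _ ⟨p, hp, rfl⟩
    obtain ⟨hp1, hp2, hp3⟩ := hS p hp
    rw [twiceStdTriangle_eq]
    refine ⟨?_, ?_, ?_⟩ <;> simp only [latticePt] <;> exact_mod_cast ‹_›
  · refine convexHull_min ?_ (convex_convexHull ℝ _)
    rintro z (rfl | rfl | rfl)
    · simpa [latticePt] using latticePt_mem_latticeHull h₀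
    · simpa [latticePt] using latticePt_mem_latticeHull h₁
    · simpa [latticePt] using latticePt_mem_latticeHull h₂

lemma exists_window_of_centered {w m : ℤ} (hw : 3 ≤ w) (hm : -w < 2 * m) (hm' : 2 * m ≤ w) :
    ∃ x₀ : ℤ, x₀ ≤ 0 ∧ 1 ≤ x₀ + (w - 1) ∧ x₀ ≤ m ∧ m + 1 ≤ x₀ + (w - 1) ∧
      ∀ k x : ℤ, 0 < k → k < w → |w * x - k * m| ≤ w → x₀ ≤ x ∧ x ≤ x₀ + (w - 1) := by
  have hw0 : (0 : ℤ) ≤ w := by omega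
  rcases lt_trichotomy m 0 with hm0 | rfl | hm0
  · refine ⟨m, by omega, by omega, le_rfl, by omega, fun k x hk hkw hx => ?_⟩
    obtain ⟨hx1, hx2⟩ := abs_le.1 hx
    have h1 : w * (m - 1) < w * x := by nlinarith [mul_pos (sub_pos.2 hkw) (neg_pos.2 hm0)]
    have h2 : w * x < w * 1 := by nlinarith [mul_pos hk (neg_pos.2 hm0)]
    have := lt_of_mul_lt_mul_left h1 hw0
    have := lt_of_mul_lt_mul_left h2 hw0
    omega
  · refine ⟨-1, by omega, by omega, by omega, by omega, fun k x hk hkw hx => ?_⟩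
    obtain ⟨hx1, hx2⟩ := abs_le.1 hx
    have h1 : w * (-2) < w * x := by linarith
    have h2 : w * x < w * 2 := by linarith
    have := lt_of_mul_lt_mul_left h1 hw0
    have := lt_of_mul_lt_mul_left h2 hw0
    omega
  · refine ⟨0, by omega, by omega, hm0.le, by omega, fun k x hk hkw hx => ?_⟩
    obtain ⟨hx1, hx2⟩ := abs_le.1 hx
    have h1 : w * (-1) < w * x := by nlinarith [mul_pos hk hm0]
    have h2 : w * x < w * (m + 1) := by nlinarith [mul_pos (sub_pos.2 hkw) hm0]
    have := lt_of_mul_lt_mul_left h1 hw0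
    have := lt_of_mul_lt_mul_left h2 hw0
    omega

structure InNormalPosition (S : Finset (ℤ × ℤ)) (w β τ m : ℤ) : Prop where
  snd_mem : ∀ p ∈ S, 0 ≤ p.2 ∧ p.2 ≤ w
  origin_mem : ((0, 0) : ℤ × ℤ) ∈ S
  bottom_right_mem : (β, 0) ∈ S
  bottom : ∀ p ∈ S, p.2 = 0 → 0 ≤ p.1 ∧ p.1 ≤ β
  top_left_mem : (m, w) ∈ S
  top_right_mem : (m + τ, w) ∈ S
  top : ∀ p ∈ S, p.2 = w → m ≤ p.1 ∧ p.1 ≤ m + τ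
  top_le_bottom : τ ≤ β
  neg_lt_two_mul : -w < 2 * m
  two_mul_le : 2 * m ≤ w

namespace InNormalPosition

variable {S : Finset (ℤ × ℤ)} {w β τ m : ℤ}

lemma row_cases (hS : InNormalPosition S w β τ m) {p : ℤ × ℤ} (hp : p ∈ S) :
    (p.2 = 0 ∧ 0 ≤ p.1 ∧ p.1 ≤ β) ∨ (p.2 = w ∧ m ≤ p.1 ∧ p.1 ≤ m + τ) ∨ (0 < p.2 ∧ p.2 < w) := by
  obtain ⟨h0, hw⟩ := hS.snd_mem p hp
  rcases h0.eq_or_lt with h0 | h0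
  · exact Or.inl ⟨h0.symm, hS.bottom p hp h0.symm⟩
  rcases hw.eq_or_lt with hw | hw
  · exact Or.inr (Or.inl ⟨hw, hS.top p hp hw⟩)
  · exact Or.inr (Or.inr ⟨h0, hw⟩)

lemma top_length_nonneg (hS : InNormalPosition S w β τ m) : 0 ≤ τ := by
  have := (hS.top _ hS.top_right_mem rfl).1
  omega

variable (hint : (interior (latticeHull S)).Nonempty) (hhol : IsHollow (latticeHull S))
include hint hhol

lemma row_one_gap (hS : InNormalPosition S w β τ m) (hw : 1 < w) {n : ℤ} (hn : m < w * n) :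
    (w - 1) * β + m + τ ≤ w * n := by
  have hwR : (0 : ℝ) < w := by exact_mod_cast (zero_lt_one.trans hw)
  have h := hhol.fst_le_of_fst_lt (convex_convexHull ℝ _) hint
    (latticePt_mem_latticeHull hS.origin_mem) (latticePt_mem_latticeHull hS.top_left_mem)
    (chord_mem_latticeHull hS.origin_mem hS.top_left_mem (k := 1) (by omega) rfl rfl
      zero_le_one hw.le)
    (chord_mem_latticeHull hS.bottom_right_mem hS.top_right_mem (k := 1) (by omega) rfl rfl
      zero_le_one hw.le)
    (k := 1) (n := n) (by simp [latticePt]) (show ((1 : ℤ) : ℝ) < w by exact_mod_cast hw)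
    rfl rfl
    (by rw [div_lt_iff₀ hwR]; exact_mod_cast (by linarith : (w - 1) * 0 + 1 * m < n * w))
  rw [div_le_iff₀ hwR] at h
  have h' : (w - 1) * β + 1 * (m + τ) ≤ n * w := by exact_mod_cast h
  linarith

lemma abs_sub_le_one (hS : InNormalPosition S w β τ m) {p q : ℤ × ℤ} (hp : p ∈ S) (hq : q ∈ S)
    (hp0 : 0 < p.2) (hpw : p.2 < w) (hqp : q.2 = p.2) : |p.1 - q.1| ≤ 1 := by
  have := hhol.abs_sub_le_one (convex_convexHull ℝ _) hint
    (latticePt_mem_latticeHull hS.origin_mem) (latticePt_mem_latticeHull hS.top_left_mem)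
    (latticePt_mem_latticeHull hq) (latticePt_mem_latticeHull hp)
    (by simpa [latticePt] using hp0) (by simpa [latticePt] using hpw) (by simp [latticePt, hqp])
  simp only [latticePt] at this
  exact_mod_cast this

lemma exists_window_of_three_le (hS : InNormalPosition S w β τ m) (hw : 3 ≤ w) :
    ∃ x₀, ∀ p ∈ S, x₀ ≤ p.1 ∧ p.1 ≤ x₀ + (w - 1) := by
  have hgap := hS.row_one_gap hint hhol (by omega) (n := m / w + 1)
    (by linarith [Int.lt_ediv_add_one_mul_self m (by omega : 0 < w)])
  have hwidth : (w - 1) * β + τ ≤ w := by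
    linarith [Int.ediv_mul_le m (by omega : w ≠ 0)]
  have hβ : β ≤ 1 := by
    by_contra! hβ
    nlinarith [hS.top_length_nonneg, mul_le_mul_of_nonneg_left hβ (by omega : (0 : ℤ) ≤ w - 1)]
  obtain ⟨x₀, h0, h1, hm, hm1, hmid⟩ :=
    exists_window_of_centered hw hS.neg_lt_two_mul hS.two_mul_le
  refine ⟨x₀, fun p hp => ?_⟩
  rcases hS.row_cases hp with ⟨-, hp1, hp2⟩ | ⟨-, hp1, hp2⟩ | ⟨hp0, hpw⟩
  · omega
  · have := hS.top_le_bottom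
    omega
  · refine hmid p.2 p.1 hp0 hpw ?_
    simpa using hhol.abs_sub_chord_le hint hp hp0 hpw hS.origin_mem hS.top_left_mem

lemma row_one_bounds_of_two (hS : InNormalPosition S 2 β τ m) {p : ℤ × ℤ} (hp : p ∈ S)
    (hp1 : p.2 = 1) :
    m ≤ 2 * p.1 + 2 ∧ 2 * p.1 ≤ m + 2 ∧ β + m + τ ≤ 2 * p.1 + 2 ∧ 2 * p.1 ≤ β + m + τ + 2 := by
  have chord {a b : ℤ} (ha : (a, 0) ∈ S) (hb : (b, 2) ∈ S) : |2 * p.1 - (a + b)| ≤ 2 := by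
    simpa [hp1] using hhol.abs_sub_chord_le hint hp (by omega) (by omega) ha hb
  have := abs_le.1 (chord hS.origin_mem hS.top_left_mem)
  have := abs_le.1 (chord hS.bottom_right_mem hS.top_right_mem)
  omega

lemma thin_or_triangle_of_two (hS : InNormalPosition S 2 β τ m) :
    (∃ x₀, ∀ p ∈ S, x₀ ≤ p.1 ∧ p.1 ≤ x₀ + 1) ∨ latticeHull S = twiceStdTriangle := by
  have hτ := hS.top_length_nonneg
  have hτβ := hS.top_le_bottom
  have hm := hS.neg_lt_two_mul
  have hm' := hS.two_mul_le
  have hgap : β + m + τ ≤ 2 := by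
    have := hS.row_one_gap hint hhol (by norm_num) (n := 1) (by omega)
    linarith
  have row {p : ℤ × ℤ} (hp : p ∈ S) (hp1 : p.2 = 1) := hS.row_one_bounds_of_two hint hhol hp hp1
  by_cases hβ : β = 2
  · right
    obtain ⟨rfl, rfl⟩ : τ = 0 ∧ m = 0 := by omega
    subst hβ
    refine latticeHull_eq_twiceStdTriangle hS.origin_mem hS.bottom_right_mem hS.top_left_mem
      fun p hp => ?_
    rcases hS.row_cases hp with h | h | h
    · omega
    · omega
    · have := row hp (by omega)
      omega
  left
  by_cases hneg : ((-1, 1) : ℤ × ℤ) ∈ S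
  · have := row hneg rfl
    refine ⟨-1, fun p hp => ?_⟩
    rcases hS.row_cases hp with h | h | h
    · omega
    · omega
    · have := row hp (by omega)
      have := abs_le.1 (hS.abs_sub_le_one hint hhol hp hneg h.1 h.2 (by omega))
      omega
  · refine ⟨0, fun p hp => ?_⟩
    rcases hS.row_cases hp with h | h | h
    · omega
    · omega
    · have := row hp (by omega)
      have : p ≠ (-1, 1) := fun h => hneg (h ▸ hp)
      have : p.1 ≠ -1 := fun h' => this (Prod.ext h' (by omega))
      omega

lemma thin_or_triangle (hS : InNormalPosition S w β τ m) (hw : 2 ≤ w) :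
    (∃ x₀, ∀ p ∈ S, x₀ ≤ p.1 ∧ p.1 ≤ x₀ + (w - 1)) ∨ latticeHull S = twiceStdTriangle := by
  rcases hw.eq_or_lt with rfl | hw
  · simpa using hS.thin_or_triangle_of_two hint hhol
  · exact Or.inl (hS.exists_window_of_three_le hint hhol hw)

end InNormalPosition

lemma exists_row_extremes (S : Finset (ℤ × ℤ)) {y : ℤ} (h : ∃ p ∈ S, p.2 = y) :
    ∃ a b : ℤ, (a, y) ∈ S ∧ (b, y) ∈ S ∧ ∀ p ∈ S, p.2 = y → a ≤ p.1 ∧ p.1 ≤ b := by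
  obtain ⟨p₀, hp₀, hp₀y⟩ := h
  have hne : (S.filter (·.2 = y)).Nonempty := ⟨p₀, Finset.mem_filter.2 ⟨hp₀, hp₀y⟩⟩
  obtain ⟨p, hp, hmin⟩ := (S.filter (·.2 = y)).exists_min_image Prod.fst hne
  obtain ⟨q, hq, hmax⟩ := (S.filter (·.2 = y)).exists_max_image Prod.fst hne
  rw [Finset.mem_filter] at hp hq
  refine ⟨p.1, q.1, hp.2 ▸ hp.1, hq.2 ▸ hq.1, fun r hr hry => ?_⟩
  exact ⟨hmin r (Finset.mem_filter.2 ⟨hr, hry⟩), hmax r (Finset.mem_filter.2 ⟨hr, hry⟩)⟩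

lemma exists_centering_shear {w : ℤ} (hw : 0 < w) (v : ℤ) :
    ∃ n : ℤ, -w < 2 * (v + n * w) ∧ 2 * (v + n * w) ≤ w := by
  refine ⟨(w - 2 * v) / (2 * w), ?_⟩
  have h := Int.mul_ediv_add_emod (w - 2 * v) (2 * w)
  have h0 := Int.emod_nonneg (w - 2 * v) (by omega : 2 * w ≠ 0)
  have h1 := Int.emod_lt_of_pos (w - 2 * v) (by omega : 0 < 2 * w)
  constructor <;> linarith

section NormalForm

variable {S : Finset (ℤ × ℤ)} {lo w b₀ b₁ t₀ t₁ : ℤ} (hw : 0 < w)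
  (hS : ∀ p ∈ S, lo ≤ p.2 ∧ p.2 ≤ lo + w)
  (hb₀ : (b₀, lo) ∈ S) (hb₁ : (b₁, lo) ∈ S) (hb : ∀ p ∈ S, p.2 = lo → b₀ ≤ p.1 ∧ p.1 ≤ b₁)
  (ht₀ : (t₀, lo + w) ∈ S) (ht₁ : (t₁, lo + w) ∈ S)
  (ht : ∀ p ∈ S, p.2 = lo + w → t₀ ≤ p.1 ∧ p.1 ≤ t₁)
include hw hS hb₀ hb₁ hb ht₀ ht₁ ht

lemma exists_inNormalPosition_of_top_le_bottom (hle : t₁ - t₀ ≤ b₁ - b₀) :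
    ∃ (g : UnimodMap) (β τ m : ℤ), InNormalPosition (S.image g.onLattice) w β τ m := by
  obtain ⟨n, hn⟩ := exists_centering_shear hw (t₀ - b₀)
  -- `(x, y) ↦ (x + n (y - lo) - b₀, y - lo)`
  let g : UnimodMap := ⟨1, n, 0, 1, -b₀ - n * lo, -lo, by norm_num⟩
  refine ⟨g, b₁ - b₀, t₁ - t₀, t₀ - b₀ + n * w, ⟨?_, ?_, ?_, ?_, ?_, ?_, ?_, hle, ?_, ?_⟩⟩
  · simp only [Finset.forall_mem_image, g, UnimodMap.onLattice]
    intro p hp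
    have := hS p hp
    omega
  · exact Finset.mem_image.2 ⟨(b₀, lo), hb₀, by simp [g, UnimodMap.onLattice]⟩
  · exact Finset.mem_image.2 ⟨(b₁, lo), hb₁, by simp [g, UnimodMap.onLattice]; ring⟩
  · simp only [Finset.forall_mem_image, g, UnimodMap.onLattice]
    intro p hp hp0
    have hp2 : p.2 = lo := by omega
    have := hb p hp hp2
    rw [hp2]
    constructor <;> linarith
  · exact Finset.mem_image.2 ⟨(t₀, lo + w), ht₀, by simp [g, UnimodMap.onLattice]; ring⟩
  · exact Finset.mem_image.2 ⟨(t₁, lo + w), ht₁, by simp [g, UnimodMap.onLattice]; ring⟩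
  · simp only [Finset.forall_mem_image, g, UnimodMap.onLattice]
    intro p hp hpw
    have hp2 : p.2 = lo + w := by omega
    have := ht p hp hp2
    rw [hp2]
    constructor <;> linarith
  · exact hn.1
  · exact hn.2

lemma exists_inNormalPosition_of_bottom_le_top (hle : b₁ - b₀ ≤ t₁ - t₀) :
    ∃ (g : UnimodMap) (β τ m : ℤ), InNormalPosition (S.image g.onLattice) w β τ m := by
  obtain ⟨n, hn⟩ := exists_centering_shear hw (b₀ - t₀)
  -- `(x, y) ↦ (x + n (lo + w - y) - t₀, lo + w - y)`
  let g : UnimodMap := ⟨1, -n, 0, -1, n * (lo + w) - t₀, lo + w, by norm_num⟩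
  refine ⟨g, t₁ - t₀, b₁ - b₀, b₀ - t₀ + n * w, ⟨?_, ?_, ?_, ?_, ?_, ?_, ?_, hle, ?_, ?_⟩⟩
  · simp only [Finset.forall_mem_image, g, UnimodMap.onLattice]
    intro p hp
    have := hS p hp
    omega
  · exact Finset.mem_image.2 ⟨(t₀, lo + w), ht₀, by simp [g, UnimodMap.onLattice]; ring⟩
  · exact Finset.mem_image.2 ⟨(t₁, lo + w), ht₁, by simp [g, UnimodMap.onLattice]; ring⟩
  · simp only [Finset.forall_mem_image, g, UnimodMap.onLattice]
    intro p hp hp0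
    have hp2 : p.2 = lo + w := by omega
    have := ht p hp hp2
    rw [hp2]
    constructor <;> linarith
  · exact Finset.mem_image.2 ⟨(b₀, lo), hb₀, by simp [g, UnimodMap.onLattice]; ring⟩
  · exact Finset.mem_image.2 ⟨(b₁, lo), hb₁, by simp [g, UnimodMap.onLattice]; ring⟩
  · simp only [Finset.forall_mem_image, g, UnimodMap.onLattice]
    intro p hp hpw
    have hp2 : p.2 = lo := by omega
    have := hb p hp hp2
    rw [hp2]
    constructor <;> linarith
  · exact hn.1
  · exact hn.2

end NormalForm

lemma exists_inNormalPosition {S : Finset (ℤ × ℤ)} {lo w : ℤ} (hw : 0 < w)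
    (hS : ∀ p ∈ S, lo ≤ p.2 ∧ p.2 ≤ lo + w) (hbot : ∃ p ∈ S, p.2 = lo)
    (htop : ∃ p ∈ S, p.2 = lo + w) :
    ∃ (g : UnimodMap) (β τ m : ℤ), InNormalPosition (S.image g.onLattice) w β τ m := by
  obtain ⟨b₀, b₁, hb₀, hb₁, hb⟩ := exists_row_extremes S hbot
  obtain ⟨t₀, t₁, ht₀, ht₁, ht⟩ := exists_row_extremes S htop
  rcases le_total (t₁ - t₀) (b₁ - b₀) with hle | hle
  · exact exists_inNormalPosition_of_top_le_bottom hw hS hb₀ hb₁ hb ht₀ ht₁ ht hle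
  · exact exists_inNormalPosition_of_bottom_le_top hw hS hb₀ hb₁ hb ht₀ ht₁ ht hle

lemma latticeHull_subset_strip {S : Finset (ℤ × ℤ)} {a b : ℤ}
    (h : ∀ p ∈ S, a ≤ p.2 ∧ p.2 ≤ b) : latticeHull S ⊆ (univ : Set ℝ) ×ˢ Icc (a : ℝ) b := by
  refine convexHull_min ?_ (convex_univ.prod (convex_Icc _ _))
  rintro _ ⟨p, hp, rfl⟩
  exact ⟨trivial, show (a : ℝ) ≤ p.2 by exact_mod_cast (h p hp).1,
    show (p.2 : ℝ) ≤ b by exact_mod_cast (h p hp).2⟩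

lemma interior_latticeHull_eq_empty {S : Finset (ℤ × ℤ)} {a : ℤ} (h : ∀ p ∈ S, p.2 = a) :
    interior (latticeHull S) = ∅ := by
  have := interior_mono (latticeHull_subset_strip fun p hp => ⟨(h p hp).ge, (h p hp).le⟩)
  rw [interior_prod_eq, Icc_self, interior_singleton, prod_empty, subset_empty_iff] at this
  exact this

lemma exists_unimodEquiv_isStandardHollow_of_height_one {S : Finset (ℤ × ℤ)} {lo : ℤ}
    (hint : (interior (latticeHull S)).Nonempty) (hS : ∀ p ∈ S, lo ≤ p.2 ∧ p.2 ≤ lo + 1) :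
    ∃ Q', UnimodEquiv (latticeHull S) Q' ∧ IsStandardHollow Q' := by
  let g : UnimodMap := ⟨1, 0, 0, 1, 0, -lo, Or.inl (by norm_num)⟩
  refine g.exists_standard_of_image
    ⟨_, .refl _, Or.inr ⟨⟨⟨_, rfl⟩, g.interior_latticeHull_image_nonempty hint⟩, ?_⟩⟩
  refine (latticeHull_subset_strip (a := 0) (b := 1) ?_).trans (by simp)
  simp only [Finset.forall_mem_image, g, UnimodMap.onLattice]
  intro p hp
  have := hS p hp
  omega

theorem exists_unimodEquiv_isStandardHollow (w : ℕ) {S : Finset (ℤ × ℤ)} {lo : ℤ}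
    (hint : (interior (latticeHull S)).Nonempty) (hhol : IsHollow (latticeHull S))
    (hS : ∀ p ∈ S, lo ≤ p.2 ∧ p.2 ≤ lo + w) :
    ∃ Q', UnimodEquiv (latticeHull S) Q' ∧ IsStandardHollow Q' := by
  induction w using Nat.strong_induction_on generalizing S lo with
  | _ w ih =>
  rcases Nat.lt_or_ge w 2 with hw | hw
  · interval_cases w
    · refine absurd (interior_latticeHull_eq_empty (a := lo) fun p hp => ?_) hint.ne_empty
      have := hS p hp
      omega
    · exact exists_unimodEquiv_isStandardHollow_of_height_one hint (by simpa using hS)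
  by_cases hbot : ∃ p ∈ S, p.2 = lo
  swap
  · push Not at hbot
    refine ih (w - 1) (by omega) hint hhol (lo := lo + 1) fun p hp => ?_
    have := hS p hp
    have := hbot p hp
    omega
  by_cases htop : ∃ p ∈ S, p.2 = lo + w
  swap
  · push Not at htop
    refine ih (w - 1) (by omega) hint hhol (lo := lo) fun p hp => ?_
    have := hS p hp
    have := htop p hp
    omega
  obtain ⟨g, β, τ, m, hN⟩ := exists_inNormalPosition (by omega) hS hbot htop
  refine g.exists_standard_of_image ?_
  have hint' := g.interior_latticeHull_image_nonempty hint
  have hhol' := g.isHollow_latticeHull_image hhol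
  rcases hN.thin_or_triangle hint' hhol' (by omega) with ⟨x₀, hx₀⟩ | htri
  · -- `(x, y) ↦ (y, x - x₀)`
    let s : UnimodMap := ⟨0, 1, 1, 0, 0, -x₀, Or.inr (by norm_num)⟩
    refine s.exists_standard_of_image (ih (w - 1) (by omega) (lo := 0)
      (s.interior_latticeHull_image_nonempty hint') (s.isHollow_latticeHull_image hhol') ?_)
    intro p hp
    obtain ⟨q, hq, rfl⟩ := Finset.mem_image.1 hp
    have := hx₀ q hq
    simp only [s, UnimodMap.onLattice]
    omega
  · exact ⟨_, .refl _, Or.inl htri⟩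

/-- Every hollow lattice polygon in `ℝ²` is unimodularly equivalent either to
twice the standard triangle, or to a lattice polygon contained in the strip `ℝ × [0,1]`
(a Cayley product of two line segments). -/
theorem hollow_polygon_classification (Q : Set (ℝ × ℝ))
    (hQ : IsLatticePolygon Q) (hhollow : IsHollow Q) :
    UnimodEquiv Q twiceStdTriangle ∨
      ∃ Q' : Set (ℝ × ℝ), IsLatticePolygon Q' ∧
        Q' ⊆ (Set.univ : Set ℝ) ×ˢ Set.Icc (0 : ℝ) 1 ∧ UnimodEquiv Q Q' := by
  obtain ⟨⟨S, rfl⟩, hint⟩ := hQ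
  obtain ⟨B, hB⟩ : ∃ B : ℕ, ∀ p ∈ S, p.2.natAbs ≤ B :=
    ⟨S.sup (·.2.natAbs), fun p hp => Finset.le_sup (f := (·.2.natAbs)) hp⟩
  obtain ⟨Q', hQQ', rfl | hQ'⟩ := exists_unimodEquiv_isStandardHollow (2 * B) (lo := -B) hint
    hhollow fun p hp => by have := hB p hp; omega
  · exact Or.inl hQQ'
  · exact Or.inr ⟨Q', hQ'.1, hQ'.2, hQQ'⟩
end

section
/- Consider the ℚ-vector space of triples (x, x', y), where x : ℤ/3 → ℚ, x' : ℤ/3 → ℚ and y : ℤ/3 × ℤ/3 → ℚ, satisfying for all i, j ∈ ℤ/3 the relations y(i,j) = y(i−1,j) − x(i) and y(i,j) = y(i,j−1) + x'(j). This solution space is a ℚ-linear subspace of ℚ³ ⊕ ℚ³ ⊕ ℚ⁹ of dimension exactly 5. -/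
/-! The relations say that `-x` and `x'` are the discrete derivatives of `y` along the two cyclic
directions of the torus `ℤ/n × ℤ/n`, so a solution is determined by `y`. Since the difference
`y (i, j) - y (i, 0)` does not change from one row to the next, going around the cycle gives
`y (i, j) = a i + b j`; conversely every such `y` comes from a solution. The solution space is
therefore isomorphic to the range of `(a, b) ↦ ((i, j) ↦ a i + b j)`, whose kernel is the line of
the pairs `(c, -c)` of constants, and it has dimension `2n - 1`, which is `5` for `n = 3`. -/

open Module

section SeparableSum

variable (K : Type*) [Field K] (ι κ : Type*)

def separableSum : (ι → K) × (κ → K) →ₗ[K] (ι × κ → K) :=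
  (LinearMap.funLeft K K Prod.fst).coprod (LinearMap.funLeft K K Prod.snd)

variable {K ι κ}

@[simp]
theorem separableSum_apply (a : ι → K) (b : κ → K) (p : ι × κ) :
    separableSum K ι κ (a, b) p = a p.1 + b p.2 := rfl

theorem ker_separableSum [Nonempty ι] [Nonempty κ] :
    LinearMap.ker (separableSum K ι κ) = K ∙ ((fun _ => 1, fun _ => -1) : (ι → K) × (κ → K)) := by
  obtain ⟨i₀⟩ := ‹Nonempty ι›
  obtain ⟨j₀⟩ := ‹Nonempty κ›
  ext ⟨a, b⟩
  rw [LinearMap.mem_ker, Submodule.mem_span_singleton]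
  constructor
  · intro h
    have hab : ∀ i j, a i + b j = 0 := fun i j => congrFun h (i, j)
    refine ⟨a i₀, Prod.ext (funext fun i => ?_) (funext fun j => ?_)⟩
    · simp only [Prod.smul_fst, Pi.smul_apply, smul_eq_mul, mul_one]
      linear_combination hab i₀ j₀ - hab i j₀
    · simp only [Prod.smul_snd, Pi.smul_apply, smul_eq_mul, mul_neg, mul_one]
      linear_combination -hab i₀ j
  · rintro ⟨c, hc⟩
    rw [← hc]
    ext p
    simp

theorem finrank_range_separableSum [Fintype ι] [Fintype κ] [Nonempty ι] [Nonempty κ] :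
    finrank K (LinearMap.range (separableSum K ι κ)) = Fintype.card ι + Fintype.card κ - 1 := by
  have hker : finrank K (LinearMap.ker (separableSum K ι κ)) = 1 := by
    rw [ker_separableSum]
    apply finrank_span_singleton
    simp [Prod.ext_iff, funext_iff]
  have := LinearMap.finrank_range_add_finrank_ker (separableSum K ι κ)
  rw [hker, finrank_prod, finrank_fintype_fun_eq_card, finrank_fintype_fun_eq_card] at this
  omega

end SeparableSum

theorem ZMod.apply_eq_apply_zero_of_apply_sub_one {n : ℕ} {α : Type*} {f : ZMod n → α}
    (h : ∀ i, f (i - 1) = f i) (i : ZMod n) : f i = f 0 := by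
  obtain ⟨k, rfl⟩ := ZMod.intCast_surjective i
  induction k using Int.induction_on with
  | zero => simp
  | succ k ih => rw [← ih, ← h]; push_cast; ring_nf
  | pred k ih => rw [← ih, ← h ((-k : ℤ) : ZMod n)]; push_cast; rfl

section GridDifferences

variable (K : Type*) [Field K] (n : ℕ)

def gridDifferenceSpace : Submodule K ((ZMod n → K) × (ZMod n → K) × (ZMod n × ZMod n → K)) where
  carrier := {v | ∀ i j : ZMod n,
      v.2.2 (i, j) = v.2.2 (i - 1, j) - v.1 i ∧
      v.2.2 (i, j) = v.2.2 (i, j - 1) + v.2.1 j}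
  add_mem' {v w} hv hw i j := by
    obtain ⟨hv₁, hv₂⟩ := hv i j
    obtain ⟨hw₁, hw₂⟩ := hw i j
    simp only [Prod.fst_add, Prod.snd_add, Pi.add_apply]
    constructor
    · linear_combination hv₁ + hw₁
    · linear_combination hv₂ + hw₂
  zero_mem' _ _ := by simp
  smul_mem' c v hv i j := by
    obtain ⟨hv₁, hv₂⟩ := hv i j
    simp only [Prod.smul_fst, Prod.smul_snd, Pi.smul_apply, smul_eq_mul]
    constructor
    · linear_combination c * hv₁
    · linear_combination c * hv₂

def gridValues : gridDifferenceSpace K n →ₗ[K] (ZMod n × ZMod n → K) :=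
  (LinearMap.snd K _ _ ∘ₗ LinearMap.snd K _ _) ∘ₗ (gridDifferenceSpace K n).subtype

variable {K n}

theorem gridValues_injective : Function.Injective (gridValues K n) := by
  rw [← LinearMap.ker_eq_bot, LinearMap.ker_eq_bot']
  rintro ⟨⟨x, x', y⟩, hv⟩ (hy : y = 0)
  subst hy
  ext i
  · simpa using ((hv i 0).1).symm
  · simpa using ((hv 0 i).2).symm
  · rfl

theorem range_gridValues :
    LinearMap.range (gridValues K n) = LinearMap.range (separableSum K (ZMod n) (ZMod n)) := by
  apply le_antisymm
  · rintro _ ⟨⟨⟨x, x', y⟩, hv⟩, rfl⟩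
    refine ⟨(fun i => y (i, 0) - y (0, 0), fun j => y (0, j)), funext fun ⟨i, j⟩ => ?_⟩
    have hrow : y (i, j) - y (i, 0) = y (0, j) - y (0, 0) :=
      ZMod.apply_eq_apply_zero_of_apply_sub_one (f := fun i => y (i, j) - y (i, 0))
        (fun i => by linear_combination (hv i 0).1 - (hv i j).1) i
    show y (i, 0) - y (0, 0) + y (0, j) = y (i, j)
    linear_combination -hrow
  · rintro _ ⟨⟨a, b⟩, rfl⟩
    refine ⟨⟨(fun i => a (i - 1) - a i, fun j => b j - b (j - 1), separableSum K _ _ (a, b)),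
      fun i j => ?_⟩, rfl⟩
    simp only [separableSum_apply]
    constructor <;> ring

theorem finrank_gridDifferenceSpace [NeZero n] :
    finrank K (gridDifferenceSpace K n) = 2 * n - 1 := by
  rw [← LinearMap.finrank_range_of_inj gridValues_injective, range_gridValues,
    finrank_range_separableSum, ZMod.card]
  omega

end GridDifferences

/-- The set of triples `(x, x', y)` with `x, x' : ℤ/3 → ℚ` and
`y : ℤ/3 × ℤ/3 → ℚ` satisfying `y(i,j) = y(i-1,j) - x(i)` and `y(i,j) = y(i,j-1) + x'(j)`
for all `i, j ∈ ℤ/3` is a `ℚ`-linear subspace of `ℚ³ ⊕ ℚ³ ⊕ ℚ⁹` of dimension exactly 5. -/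
theorem solution_space_P3P3_dim_five :
    ∃ W : Submodule ℚ ((ZMod 3 → ℚ) × (ZMod 3 → ℚ) × (ZMod 3 × ZMod 3 → ℚ)),
      (W : Set ((ZMod 3 → ℚ) × (ZMod 3 → ℚ) × (ZMod 3 × ZMod 3 → ℚ)))
          = {v | ∀ i j : ZMod 3,
              v.2.2 (i, j) = v.2.2 (i - 1, j) - v.1 i ∧
              v.2.2 (i, j) = v.2.2 (i, j - 1) + v.2.1 j} ∧
      Module.finrank ℚ W = 5 :=
  ⟨gridDifferenceSpace ℚ 3, rfl, finrank_gridDifferenceSpace⟩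
end
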